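/- arXiv:2407.07029 — 12 statements merged into one kernel-verified Lean document; each statement's English description precedes it below -/
import Mathlib

section
/- A necklace (lexicographically least rotation of a word) α over a finite alphabet is symmetric (i.e., its reversal lies in the same rotation class) if and only if there exist palindromes β₁ and β₂ such that α = β₁β₂. -/
/-- `β` is a rotation of `α`. -/
def IsRotationOf (β α : List ℕ) : Prop := ∃ i, β = α.rotate i

/-- A necklace: lexicographically smallest among its rotations. -/
def IsNecklace (α : List ℕ) : Prop := ∀ i, α ≤ α.rotate i

/-- A bracelet: lexicographically smallest among all rotations of itself and of its reversal. -/
def IsBracelet (α : List ℕ) : Prop :=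
  (∀ i, α ≤ α.rotate i) ∧ (∀ i, α ≤ α.reverse.rotate i)

/-- Symmetric: the reversal lies in the same rotation class. -/
def IsSymmetric (α : List ℕ) : Prop := IsRotationOf α.reverse α

/-- Asymmetric bracelet. -/
def IsAsymBracelet (α : List ℕ) : Prop := IsBracelet α ∧ ¬ IsSymmetric α

/-- A necklace is symmetric iff it is a concatenation of two palindromes. -/
theorem necklace_symmetric_iff_two_palindromes (α : List ℕ)
    (hneck : IsNecklace α) :
    IsSymmetric α ↔
      ∃ β₁ β₂ : List ℕ, β₁.Palindrome ∧ β₂.Palindrome ∧ α = β₁ ++ β₂ := by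
  constructor
  · rintro ⟨i, hi⟩
    rw [List.rotate_eq_drop_append_take_mod] at hi
    refine ⟨α.take (i % α.length), α.drop (i % α.length), ?_, ?_, (List.take_append_drop _ _).symm⟩
    · apply List.Palindrome.of_reverse_eq
      have h2 : α.reverse = (α.drop (i % α.length)).reverse ++ (α.take (i % α.length)).reverse := by
        conv_lhs => rw [← List.take_append_drop (i % α.length) α]
        rw [List.reverse_append]
      rw [h2] at hi
      exact (List.append_inj hi (by simp)).2
    · apply List.Palindrome.of_reverse_eq
      have h2 : α.reverse = (α.drop (i % α.length)).reverse ++ (α.take (i % α.length)).reverse := by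
        conv_lhs => rw [← List.take_append_drop (i % α.length) α]
        rw [List.reverse_append]
      rw [h2] at hi
      exact (List.append_inj hi (by simp)).1
  · rintro ⟨β₁, β₂, h₁, h₂, rfl⟩
    exact ⟨β₁.length, by rw [List.rotate_append_length_eq, List.reverse_append,
      h₁.reverse_eq, h₂.reverse_eq]⟩
end

section
/- Let α = a₁a₂⋯aₙ ≠ 0ⁿ be a bracelet and let i be the index of its first nonzero symbol. If aᵢ > 1, then the word obtained from α by decrementing aᵢ (i.e., 0^{i−1}(aᵢ−1)a_{i+1}⋯aₙ) is again a bracelet. -/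
namespace BraceletAux

local notation "zeros" m => List.replicate m (0:ℕ)

lemma prefix_lt (c l l' : List ℕ) (h : l < l') : c ++ l < c ++ l' := by
  induction c with
  | nil => exact h
  | cons x xs ih => exact List.Lex.cons ih

lemma prefix_le (c l l' : List ℕ) (h : l ≤ l') : c ++ l ≤ c ++ l' := by
  rcases h.lt_or_eq with h | rfl
  · exact le_of_lt (prefix_lt c l l' h)
  · exact le_refl _

lemma prefix_le_cancel (c l l' : List ℕ) (h : c ++ l ≤ c ++ l') : l ≤ l' := by
  by_contra hc
  exact absurd h (not_le.2 (prefix_lt c l' l (not_le.1 hc)))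

lemma head_le_of_cons_le (x y : ℕ) (s r : List ℕ) (h : x::s ≤ y::r) : x ≤ y := by
  by_contra hc
  exact absurd h (not_le.2 (List.Lex.rel (not_le.1 hc)))

lemma tail_le_of_cons_le (x : ℕ) (s r : List ℕ) (h : x::s ≤ x::r) : s ≤ r := by
  by_contra hc
  exact absurd h (not_le.2 (List.Lex.cons (not_le.1 hc)))

lemma zeros_le_bound (m a q : ℕ) (t w : List ℕ) (ha : 0 < a)
    (h : List.replicate m 0 ++ a::t ≤ List.replicate q 0 ++ w) : q ≤ m := by
  by_contra hc
  push_neg at hc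
  have e : List.replicate q (0:ℕ) ++ w
      = List.replicate m 0 ++ (0 :: (List.replicate (q - m - 1) 0 ++ w)) := by
    rw [show q = m + (1 + (q - m - 1)) by omega, List.replicate_add, List.replicate_add]
    simp
  rw [e] at h
  have : List.replicate m (0:ℕ) ++ (0 :: (List.replicate (q - m - 1) 0 ++ w))
      < List.replicate m 0 ++ a::t := prefix_lt _ _ _ (List.Lex.rel ha)
  exact absurd h (not_le.2 this)

/-- Master lemma, case where rotation head is a non-decremented letter. -/
lemma M1 (m a p y : ℕ) (t w' : List ℕ) (ha : 1 < a) (hy : 0 < y)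
    (h : List.replicate m 0 ++ a::t ≤ List.replicate p 0 ++ y::w') (w : List ℕ) :
    List.replicate m 0 ++ (a-1)::t ≤ List.replicate p 0 ++ y::w := by
  have hpm : p ≤ m := zeros_le_bound m a p t (y::w') (by omega) h
  rcases lt_or_eq_of_le hpm with hlt | rfl
  · apply le_of_lt
    have e : List.replicate m (0:ℕ) ++ (a-1)::t
        = List.replicate p 0 ++ (0 :: (List.replicate (m - p - 1) 0 ++ (a-1)::t)) := by
      rw [show m = p + (1 + (m - p - 1)) by omega, List.replicate_add, List.replicate_add]
      simp
    rw [e]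
    exact prefix_lt _ _ _ (List.Lex.rel hy)
  · have hay : a ≤ y := head_le_of_cons_le _ _ _ _ (prefix_le_cancel _ _ _ h)
    exact le_of_lt (prefix_lt _ _ _ (List.Lex.rel (by omega : a - 1 < y)))

/-- Master lemma, case where rotation head is the decremented letter. -/
lemma M2 (m a p : ℕ) (t w : List ℕ) (ha : 1 < a)
    (h : List.replicate m 0 ++ a::t ≤ List.replicate p 0 ++ a::w) :
    List.replicate m 0 ++ (a-1)::t ≤ List.replicate p 0 ++ (a-1)::w := by
  have hpm : p ≤ m := zeros_le_bound m a p t (a::w) (by omega) h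
  rcases lt_or_eq_of_le hpm with hlt | rfl
  · apply le_of_lt
    have e : List.replicate m (0:ℕ) ++ (a-1)::t
        = List.replicate p 0 ++ (0 :: (List.replicate (m - p - 1) 0 ++ (a-1)::t)) := by
      rw [show m = p + (1 + (m - p - 1)) by omega, List.replicate_add, List.replicate_add]
      simp
    rw [e]
    exact prefix_lt _ _ _ (List.Lex.rel (by omega : (0:ℕ) < a - 1))
  · have htw : t ≤ w := tail_le_of_cons_le _ _ _ (prefix_le_cancel _ _ _ h)
    have e1 : List.replicate p (0:ℕ) ++ (a-1)::t = (List.replicate p 0 ++ [a-1]) ++ t := by simp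
    have e2 : List.replicate p (0:ℕ) ++ (a-1)::w = (List.replicate p 0 ++ [a-1]) ++ w := by simp
    rw [e1, e2]
    exact prefix_le _ _ _ htw

lemma decomp (l : List ℕ) :
    (∃ p, l = List.replicate p 0) ∨ ∃ p y r, 0 < y ∧ l = List.replicate p 0 ++ y :: r := by
  induction l with
  | nil => exact Or.inl ⟨0, rfl⟩
  | cons x xs ih =>
    rcases Nat.eq_zero_or_pos x with rfl | hx
    · rcases ih with ⟨p, rfl⟩ | ⟨p, y, r, hy, rfl⟩
      · exact Or.inl ⟨p + 1, by rw [List.replicate_succ]⟩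
      · exact Or.inr ⟨p + 1, y, r, hy, by rw [List.replicate_succ]; simp⟩
    · exact Or.inr ⟨0, x, xs, hx, rfl⟩

lemma rot_a (c : ℕ) (t : List ℕ) (m i : ℕ) (hi : i ≤ m) :
    (List.replicate m 0 ++ c :: t).rotate i
      = List.replicate (m - i) 0 ++ c :: (t ++ List.replicate i 0) := by
  rw [List.rotate_eq_drop_append_take (by simp; omega)]
  rw [List.drop_append, List.take_append]
  simp [List.drop_replicate, List.take_replicate, Nat.sub_eq_zero_of_le, hi,
    Nat.min_eq_left hi, List.append_assoc]

lemma rot_b (c : ℕ) (t : List ℕ) (m j : ℕ) (hj : j ≤ t.length) :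
    (List.replicate m 0 ++ c :: t).rotate (m + 1 + j)
      = t.drop j ++ (List.replicate m 0 ++ c :: t.take j) := by
  rw [List.rotate_eq_drop_append_take (by simp; omega)]
  rw [List.drop_append, List.take_append]
  simp only [List.length_replicate]
  rw [show m + 1 + j - m = j + 1 by omega]
  simp [show m - (m + 1 + j) = 0 by omega, show (m + 1 + j) ⊓ m = m by omega,
    List.drop_replicate, List.take_replicate]

lemma rev_eq (c : ℕ) (t : List ℕ) (m : ℕ) :
    (List.replicate m 0 ++ c :: t).reverse = t.reverse ++ c :: List.replicate m 0 := by
  simp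

lemma rotr_a (c : ℕ) (t : List ℕ) (m i : ℕ) (hi : i ≤ t.length) :
    (t.reverse ++ c :: List.replicate m 0).rotate i
      = t.reverse.drop i ++ c :: (List.replicate m 0 ++ t.reverse.take i) := by
  rw [List.rotate_eq_drop_append_take (by simp; omega)]
  rw [List.drop_append, List.take_append]
  simp [show i - t.reverse.length = 0 by simp; omega, show i - t.length = 0 by omega]

lemma rotr_b (c : ℕ) (t : List ℕ) (m j : ℕ) (hj : j ≤ m) :
    (t.reverse ++ c :: List.replicate m 0).rotate (t.length + 1 + j)
      = List.replicate (m - j) 0 ++ (t.reverse ++ c :: List.replicate j 0) := by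
  rw [List.rotate_eq_drop_append_take (by simp; omega)]
  rw [List.drop_append, List.take_append]
  rw [show t.length + 1 + j - t.reverse.length = j + 1 by simp; omega]
  simp [List.drop_replicate, List.take_replicate, Nat.min_eq_left hj,
    List.drop_eq_nil_of_le (by simp; omega : t.reverse.length ≤ t.length + 1 + j),
    List.take_of_length_le (by simp; omega : t.reverse.length ≤ t.length + 1 + j)]

end BraceletAux

/-- Decrementing the first nonzero symbol (when it exceeds 1) of a bracelet
yields a bracelet. -/
theorem firstNonMin_isBracelet (m a : ℕ) (t : List ℕ) (ha : 1 < a)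
    (hb : IsBracelet (List.replicate m 0 ++ a :: t)) :
    IsBracelet (List.replicate m 0 ++ (a - 1) :: t) := by
  obtain ⟨hb1, hb2⟩ := hb
  have hlen1 : (List.replicate m 0 ++ (a-1)::t).length = m + 1 + t.length := by
    simp only [List.length_append, List.length_replicate, List.length_cons]; omega
  have hlen2 : (t.reverse ++ (a-1) :: List.replicate m 0).length = m + 1 + t.length := by
    simp only [List.length_append, List.length_replicate, List.length_cons,
      List.length_reverse]; omega
  have key1 : ∀ k, k < m + 1 + t.length →
      List.replicate m 0 ++ (a-1)::t ≤ (List.replicate m 0 ++ (a-1)::t).rotate k := by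
    intro k hklt
    rcases le_or_gt k m with hkm | hkm
    · rw [BraceletAux.rot_a _ _ _ _ hkm]
      have hα := hb1 k
      rw [BraceletAux.rot_a _ _ _ _ hkm] at hα
      exact BraceletAux.M2 _ _ _ _ _ ha hα
    · obtain ⟨j, rfl⟩ : ∃ j, k = m + 1 + j := ⟨k - m - 1, by omega⟩
      have hj : j ≤ t.length := by omega
      rw [BraceletAux.rot_b _ _ _ _ hj]
      have hα := hb1 (m + 1 + j)
      rw [BraceletAux.rot_b _ _ _ _ hj] at hα
      rcases BraceletAux.decomp (t.drop j) with ⟨p, hp⟩ | ⟨p, y, r, hy, hp⟩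
      · rw [hp] at hα ⊢
        have e : ∀ c : ℕ, List.replicate p (0:ℕ) ++ (List.replicate m 0 ++ c :: t.take j)
            = List.replicate (p+m) 0 ++ c :: t.take j := by
          intro c; rw [List.replicate_add, List.append_assoc]
        rw [e (a-1)]; rw [e a] at hα
        exact BraceletAux.M2 _ _ _ _ _ ha hα
      · rw [hp] at hα ⊢
        have e : ∀ c : ℕ, (List.replicate p 0 ++ y :: r) ++ (List.replicate m 0 ++ c :: t.take j)
            = List.replicate p 0 ++ y :: (r ++ (List.replicate m 0 ++ c :: t.take j)) := by
          intro c; simp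
        rw [e (a-1)]; rw [e a] at hα
        exact BraceletAux.M1 _ _ _ _ _ _ ha hy hα _
  have key2 : ∀ k, k < m + 1 + t.length →
      List.replicate m 0 ++ (a-1)::t ≤ (t.reverse ++ (a-1) :: List.replicate m 0).rotate k := by
    intro k hklt
    rcases le_or_gt k t.length with hkt | hkt
    · rw [BraceletAux.rotr_a _ _ _ _ hkt]
      have hα := hb2 k
      rw [BraceletAux.rev_eq, BraceletAux.rotr_a _ _ _ _ hkt] at hα
      rcases BraceletAux.decomp (t.reverse.drop k) with ⟨p, hp⟩ | ⟨p, y, r, hy, hp⟩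
      · rw [hp] at hα ⊢
        exact BraceletAux.M2 _ _ _ _ _ ha hα
      · rw [hp] at hα ⊢
        have e : ∀ c : ℕ, (List.replicate p 0 ++ y :: r) ++ c :: (List.replicate m 0 ++ t.reverse.take k)
            = List.replicate p 0 ++ y :: (r ++ c :: (List.replicate m 0 ++ t.reverse.take k)) := by
          intro c; simp
        rw [e (a-1)]; rw [e a] at hα
        exact BraceletAux.M1 _ _ _ _ _ _ ha hy hα _
    · obtain ⟨j, rfl⟩ : ∃ j, k = t.length + 1 + j := ⟨k - t.length - 1, by omega⟩
      have hjm : j ≤ m := by omega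
      rw [BraceletAux.rotr_b _ _ _ _ hjm]
      have hα := hb2 (t.length + 1 + j)
      rw [BraceletAux.rev_eq, BraceletAux.rotr_b _ _ _ _ hjm] at hα
      rcases BraceletAux.decomp t.reverse with ⟨p, hp⟩ | ⟨p, y, r, hy, hp⟩
      · rw [hp] at hα ⊢
        have e : ∀ c : ℕ, List.replicate (m-j) (0:ℕ) ++ (List.replicate p 0 ++ c :: List.replicate j 0)
            = List.replicate (m-j+p) 0 ++ c :: List.replicate j 0 := by
          intro c; rw [List.replicate_add, List.append_assoc]
        rw [e (a-1)]; rw [e a] at hα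
        exact BraceletAux.M2 _ _ _ _ _ ha hα
      · rw [hp] at hα ⊢
        have e : ∀ c : ℕ, List.replicate (m-j) (0:ℕ) ++ ((List.replicate p 0 ++ y :: r) ++ c :: List.replicate j 0)
            = List.replicate (m-j+p) 0 ++ y :: (r ++ c :: List.replicate j 0) := by
          intro c; simp only [List.replicate_add, List.append_assoc, List.cons_append]
        rw [e (a-1)]; rw [e a] at hα
        exact BraceletAux.M1 _ _ _ _ _ _ ha hy hα _
  constructor
  · intro i
    rw [← List.rotate_mod]
    apply key1
    rw [hlen1]
    exact Nat.mod_lt _ (by omega)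
  · intro i
    rw [← List.rotate_mod, BraceletAux.rev_eq]
    apply key2
    rw [hlen2]
    exact Nat.mod_lt _ (by omega)
end

section
/- Let α = a₁a₂⋯aₙ be an asymmetric bracelet with first nonzero symbol aᵢ > 1 at index i. Then the word 0^{i−1}(aᵢ−1)a_{i+1}⋯aₙ is also an asymmetric bracelet. -/
namespace AsymAux

/-- `Zr k` = block of `k` zeros. -/
def Zr (k : ℕ) : List ℕ := List.replicate k 0

lemma Zr_zero : Zr 0 = [] := rfl

lemma Zr_succ (k : ℕ) : Zr (k + 1) = 0 :: Zr k := rfl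

lemma Zr_add (i j : ℕ) : Zr (i + j) = Zr i ++ Zr j := List.replicate_add _ _ _

lemma Zr_reverse (k : ℕ) : (Zr k).reverse = Zr k := List.reverse_replicate

lemma Zr_swap (e m : ℕ) : Zr e ++ Zr m = Zr m ++ Zr e := by
  rw [← Zr_add, ← Zr_add, Nat.add_comm]

lemma Zr_cons {e : ℕ} (he : 0 < e) (l : List ℕ) : Zr e ++ l = 0 :: (Zr (e - 1) ++ l) := by
  obtain ⟨k, rfl⟩ : ∃ k, e = k + 1 := ⟨e - 1, by omega⟩
  simp [Zr_succ]

lemma rev_block (m e a : ℕ) : (Zr m ++ a :: Zr e).reverse = Zr e ++ a :: Zr m := by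
  rw [List.reverse_append, List.reverse_cons, Zr_reverse, Zr_reverse]
  simp

lemma listLt_iff {x y : List ℕ} : x < y ↔ List.Lex (· < ·) x y := Iff.rfl

lemma lt_mid (p : List ℕ) {c d : ℕ} (hcd : c < d) (x y : List ℕ) :
    p ++ c :: x < p ++ d :: y := by
  rw [listLt_iff]
  induction p with
  | nil => exact List.Lex.rel hcd
  | cons a p ih => exact List.Lex.cons ih

lemma lt_app (p : List ℕ) {x y : List ℕ} (h : x < y) : p ++ x < p ++ y := by
  rw [listLt_iff] at h ⊢
  exact List.Lex.append_left _ h p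

lemma le_app (p : List ℕ) {x y : List ℕ} (h : x ≤ y) : p ++ x ≤ p ++ y := by
  rcases lt_or_eq_of_le h with h | h
  · exact le_of_lt (lt_app p h)
  · subst h; exact le_rfl

lemma le_mid_head {p : List ℕ} {c d : ℕ} {x y : List ℕ}
    (h : p ++ c :: x ≤ p ++ d :: y) : c ≤ d := by
  by_contra hcd
  push_neg at hcd
  exact absurd (lt_mid p hcd y x) (not_lt.mpr h)

lemma lt_cancel {p x y : List ℕ} (h : p ++ x < p ++ y) : x < y := by
  by_contra hxy
  rw [not_lt] at hxy
  exact absurd h (not_lt.mpr (le_app p hxy))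

lemma zero_decomp (l : List ℕ) :
    ∃ e l', l = Zr e ++ l' ∧ (l' = [] ∨ ∃ c s, l' = c :: s ∧ 0 < c) := by
  induction l with
  | nil => exact ⟨0, [], rfl, Or.inl rfl⟩
  | cons a l ih =>
    rcases Nat.eq_zero_or_pos a with h0 | hp
    · obtain ⟨e, l', he, hl'⟩ := ih
      refine ⟨e + 1, l', ?_, hl'⟩
      rw [Zr_succ, List.cons_append, ← he, h0]
    · exact ⟨0, a :: l, rfl, Or.inr ⟨a, l, rfl, hp⟩⟩

lemma repl_split {u w : List ℕ} {m : ℕ} (h : u ++ w = Zr m) :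
    u = Zr u.length ∧ w = Zr w.length ∧ u.length + w.length = m := by
  have hm : u.length + w.length = m := by
    have := congrArg List.length h
    simpa [Zr] using this
  have hu : u = Zr u.length := by
    have h1 := congrArg (List.take u.length) h
    rw [List.take_left] at h1
    calc u = List.take u.length (Zr m) := h1
      _ = Zr u.length := by
          unfold Zr
          rw [List.take_replicate, inf_eq_left.mpr (by omega)]
  have hw : w = Zr w.length := by
    have h1 := congrArg (List.drop u.length) h
    rw [List.drop_left] at h1
    calc w = List.drop u.length (Zr m) := h1
      _ = Zr w.length := by
          unfold Zr
          rw [List.drop_replicate, show m - u.length = w.length by omega]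
  exact ⟨hu, hw, hm⟩

lemma rotate_of_split {l x y : List ℕ} (h : x ++ y = l) : l.rotate x.length = y ++ x := by
  subst h
  rw [List.rotate_eq_drop_append_take (by simp), List.drop_left, List.take_left]

lemma Zsplit {e m : ℕ} (h : e < m) :
    Zr m = Zr e ++ 0 :: Zr (m - e - 1) := by
  conv_lhs => rw [show m = e + (m - e - 1 + 1) by omega]
  rw [Zr_add, Zr_succ]

section Core

variable {m a b : ℕ} {t : List ℕ}

/-- Core combinatorial lemma, necklace side. -/
lemma core_neck (hb1 : 0 < b) (hba : b < a)
    (H1 : ∀ u v : List ℕ, u ++ v = Zr m ++ a :: t → (Zr m ++ a :: t : List ℕ) ≤ v ++ u) :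
    ∀ u v : List ℕ, u ++ v = Zr m ++ b :: t → (Zr m ++ b :: t : List ℕ) ≤ v ++ u := by
  intro u v h
  have ha0 : (0 : ℕ) < a := lt_trans hb1 hba
  rcases List.append_eq_append_iff.mp h with ⟨w, huw, hv⟩ | ⟨w, hu, hw⟩
  · -- u is a prefix of the zeros: Zr m = u ++ w, v = w ++ b :: t
    obtain ⟨hu0, hw0, hlen⟩ := repl_split huw.symm
    rcases Nat.eq_zero_or_pos u.length with h0 | hpos
    · have hu' : u = [] := List.length_eq_zero_iff.mp h0
      subst hu'
      simp only [List.nil_append] at h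
      subst h
      simp
    · have e1 : Zr m ++ b :: t = Zr w.length ++ 0 :: (Zr (u.length - 1) ++ b :: t) := by
        conv_lhs => rw [show m = w.length + (u.length - 1 + 1) by omega]
        rw [Zr_add, Zr_succ]
        simp
      have e2 : v ++ u = Zr w.length ++ b :: (t ++ u) := by
        conv_lhs => rw [hv, hw0]
        simp
      rw [e1, e2]
      exact le_of_lt (lt_mid _ hb1 _ _)
  · -- u = Zr m ++ w, b :: t = w ++ v
    cases w with
    | nil =>
      simp only [List.append_nil] at hu
      simp only [List.nil_append] at hw
      subst hu
      rw [← hw]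
      rcases Nat.eq_zero_or_pos m with h0 | hpos
      · subst h0
        rw [Zr_zero]
        simp
      · have e1 : Zr m ++ b :: t = ([] : List ℕ) ++ 0 :: (Zr (m - 1) ++ b :: t) := by
          rw [Zr_cons hpos]
          simp
        have e2 : (b :: t) ++ Zr m = ([] : List ℕ) ++ b :: (t ++ Zr m) := by simp
        rw [e1, e2]
        exact le_of_lt (lt_mid _ hb1 _ _)
    | cons c w' =>
      rw [List.cons_append, List.cons.injEq] at hw
      obtain ⟨hc, ht⟩ := hw
      subst hc
      by_cases hv0 : v = []
      · subst hv0
        rw [hu, ht]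
        simp
      · obtain ⟨e, ρ, hvdec, hρ⟩ := zero_decomp v
        rcases hρ with hρ0 | ⟨c', s, hρc, hc'⟩
        · -- v is a nonempty block of zeros: contradiction with α being a necklace
          subst hρ0
          rw [List.append_nil] at hvdec
          have he1 : 0 < e := by
            rcases Nat.eq_zero_or_pos e with h0 | h1
            · exact absurd (by rw [hvdec, h0, Zr_zero]) hv0
            · exact h1
          exfalso
          have hsplit : (Zr m ++ a :: w') ++ v = Zr m ++ a :: t := by
            rw [ht]; simp
          have hle := H1 _ _ hsplit
          have e2 : v ++ (Zr m ++ a :: w') = Zr m ++ 0 :: (Zr (e - 1) ++ a :: w') := by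
            rw [hvdec, ← List.append_assoc, Zr_swap, List.append_assoc, Zr_cons he1]
          rw [e2] at hle
          exact absurd hle (not_le.mpr (lt_mid _ ha0 _ _))
        · -- v = Zr e ++ c' :: s with c' > 0
          subst hρc
          rcases lt_trichotomy e m with hem | hem | hem
          · -- e < m : β has a 0 where the rotation has c' > 0
            have e1 : Zr m ++ b :: t = Zr e ++ 0 :: (Zr (m - e - 1) ++ b :: t) := by
              rw [Zsplit hem]; simp
            have e2 : v ++ u = Zr e ++ c' :: (s ++ u) := by
              rw [hvdec]; simp
            rw [e1, e2]
            exact le_of_lt (lt_mid _ hc' _ _)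
          · -- e = m : use the necklace property of α to get a ≤ c'
            have hsplit : (Zr m ++ a :: w') ++ v = Zr m ++ a :: t := by
              rw [ht]; simp
            have hle := H1 _ _ hsplit
            have e2 : v ++ (Zr m ++ a :: w') = Zr m ++ c' :: (s ++ (Zr m ++ a :: w')) := by
              rw [hvdec, hem]; simp
            rw [e2] at hle
            have hac : a ≤ c' := le_mid_head hle
            have e3 : v ++ u = Zr m ++ c' :: (s ++ u) := by
              rw [hvdec, hem]; simp
            rw [e3]
            exact le_of_lt (lt_mid _ (lt_of_lt_of_le hba hac) _ _)
          · -- e > m : contradiction with α being a necklace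
            exfalso
            have hsplit : (Zr m ++ a :: w') ++ v = Zr m ++ a :: t := by
              rw [ht]; simp
            have hle := H1 _ _ hsplit
            have e2 : v ++ (Zr m ++ a :: w') =
                Zr m ++ 0 :: (Zr (e - m - 1) ++ c' :: (s ++ (Zr m ++ a :: w'))) := by
              rw [hvdec, Zsplit hem]
              simp
            rw [e2] at hle
            exact absurd hle (not_le.mpr (lt_mid _ ha0 _ _))

/-- Core combinatorial lemma, reversal side, case where the split point is inside
the initial zero block (stated for a general decomposition `i + wl = m`). -/
lemma core_rev_A (hb1 : 0 < b) (hba : b < a)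
    (H2s : ∀ u v : List ℕ, u ++ v = Zr m ++ a :: t →
      (Zr m ++ a :: t : List ℕ) < u.reverse ++ v.reverse)
    (Hns : ∀ x y : List ℕ, x ++ y = Zr m ++ a :: t →
      y ++ x ≠ (Zr m ++ a :: t : List ℕ).reverse)
    {i wl : ℕ} (him : i + wl = m) :
    (Zr m ++ b :: t : List ℕ) < Zr i ++ (t.reverse ++ b :: Zr wl) := by
  have ha0 : (0 : ℕ) < a := lt_trans hb1 hba
  obtain ⟨e, ρ, htdec, hρ⟩ := zero_decomp t.reverse
  have hsplitα : Zr i ++ (Zr wl ++ a :: t) = Zr m ++ a :: t := by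
    rw [← List.append_assoc, ← Zr_add, him]
  have hδ' := H2s _ _ hsplitα
  have hrevform : (Zr i).reverse ++ (Zr wl ++ a :: t).reverse
      = Zr i ++ (t.reverse ++ a :: Zr wl) := by
    rw [Zr_reverse, List.reverse_append, Zr_reverse, List.reverse_cons]
    simp
  rw [hrevform] at hδ'
  rcases hρ with hρ0 | ⟨c, s, hρc, hc⟩
  · -- t is all zeros: α would be symmetric, contradiction
    subst hρ0
    rw [List.append_nil] at htdec
    have ht' : t = Zr e := by
      rw [← List.reverse_reverse t, htdec, Zr_reverse]
    exfalso
    rcases le_total e m with hem | hem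
    · refine Hns (Zr (m - e)) (Zr e ++ a :: Zr e) ?_ ?_
      · rw [← List.append_assoc, ← Zr_add, show m - e + e = m by omega, ht']
      · rw [ht', rev_block]
        have h2 : Zr e ++ Zr (m - e) = Zr m := by
          rw [← Zr_add, show e + (m - e) = m by omega]
        rw [List.append_assoc, List.cons_append, h2]
    · refine Hns (Zr m ++ a :: Zr m) (Zr (e - m)) ?_ ?_
      · rw [ht']
        have h2 : Zr m ++ Zr (e - m) = Zr e := by
          rw [← Zr_add, show m + (e - m) = e by omega]
        rw [List.append_assoc, List.cons_append, h2]
      · rw [ht', rev_block, ← List.append_assoc, ← Zr_add, show e - m + m = e by omega]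
  · -- t.reverse = Zr e ++ c :: s with c > 0
    subst hρc
    have eδ : Zr i ++ (t.reverse ++ b :: Zr wl)
        = Zr (i + e) ++ c :: (s ++ b :: Zr wl) := by
      rw [htdec, Zr_add]
      simp
    have eδ' : Zr i ++ (t.reverse ++ a :: Zr wl)
        = Zr (i + e) ++ c :: (s ++ a :: Zr wl) := by
      rw [htdec, Zr_add]
      simp
    rw [eδ'] at hδ'
    rw [eδ]
    rcases lt_trichotomy (i + e) m with hk | hk | hk
    · -- the nonzero letter appears before position m
      calc (Zr m ++ b :: t : List ℕ)
          = Zr (i + e) ++ 0 :: (Zr (m - (i + e) - 1) ++ b :: t) := by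
            rw [Zsplit hk]; simp
        _ < Zr (i + e) ++ c :: (s ++ b :: Zr wl) := lt_mid _ hc _ _
    · -- exactly at position m: get a ≤ c from the bracelet property
      rw [← hk] at hδ' ⊢
      have hac : a ≤ c := le_mid_head (le_of_lt hδ')
      exact lt_mid _ (lt_of_lt_of_le hba hac) _ _
    · -- after position m: contradiction
      exfalso
      have hlt2 : Zr (i + e) ++ c :: (s ++ a :: Zr wl) < Zr m ++ a :: t := by
        calc Zr (i + e) ++ c :: (s ++ a :: Zr wl)
            = Zr m ++ 0 :: (Zr (i + e - m - 1) ++ c :: (s ++ a :: Zr wl)) := by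
              rw [Zsplit hk]; simp
          _ < Zr m ++ a :: t := lt_mid _ ha0 _ _
      exact absurd hδ' (not_lt.mpr hlt2.le)

/-- Core combinatorial lemma, reversal side. -/
lemma core_rev (hb1 : 0 < b) (hba : b < a)
    (H2s : ∀ u v : List ℕ, u ++ v = Zr m ++ a :: t →
      (Zr m ++ a :: t : List ℕ) < u.reverse ++ v.reverse)
    (Hns : ∀ x y : List ℕ, x ++ y = Zr m ++ a :: t →
      y ++ x ≠ (Zr m ++ a :: t : List ℕ).reverse) :
    ∀ u v : List ℕ, u ++ v = Zr m ++ b :: t →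
      (Zr m ++ b :: t : List ℕ) < u.reverse ++ v.reverse := by
  intro u v h
  have ha0 : (0 : ℕ) < a := lt_trans hb1 hba
  rcases List.append_eq_append_iff.mp h with ⟨w, huw, hv⟩ | ⟨w, hu, hw⟩
  · -- u is a prefix of the zeros: Zr m = u ++ w, v = w ++ b :: t
    obtain ⟨hu0, hw0, hlen⟩ := repl_split huw.symm
    have eδ : u.reverse ++ v.reverse = Zr u.length ++ (t.reverse ++ b :: Zr w.length) := by
      conv_lhs => rw [hv, hu0, hw0]
      rw [Zr_reverse, List.reverse_append, Zr_reverse, List.reverse_cons]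
      simp
    rw [eδ]
    exact core_rev_A hb1 hba H2s Hns hlen
  · -- u = Zr m ++ w, b :: t = w ++ v
    cases w with
    | nil =>
      simp only [List.append_nil] at hu
      simp only [List.nil_append] at hw
      subst hu
      have eδ : (Zr m).reverse ++ v.reverse = Zr m ++ (t.reverse ++ b :: Zr 0) := by
        rw [← hw, Zr_reverse, List.reverse_cons, Zr_zero]
        try simp
      rw [eδ]
      exact core_rev_A hb1 hba H2s Hns (by omega)
    | cons c w' =>
      rw [List.cons_append, List.cons.injEq] at hw
      obtain ⟨hc, ht⟩ := hw
      subst hc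
      -- u = Zr m ++ b :: w', t = w' ++ v
      obtain ⟨e, ρ, hwdec, hρ⟩ := zero_decomp w'.reverse
      have hsplitα : (Zr m ++ a :: w') ++ v = Zr m ++ a :: t := by
        rw [ht]; simp
      have hδ' := H2s _ _ hsplitα
      have erevα : (Zr m ++ a :: w').reverse ++ v.reverse
          = w'.reverse ++ a :: (Zr m ++ v.reverse) := by
        rw [List.reverse_append, Zr_reverse, List.reverse_cons]
        simp
      rw [erevα] at hδ'
      have eδ : u.reverse ++ v.reverse = w'.reverse ++ b :: (Zr m ++ v.reverse) := by
        rw [hu, List.reverse_append, Zr_reverse, List.reverse_cons]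
        simp
      rw [eδ]
      rcases hρ with hρ0 | ⟨c', s, hρc, hc'⟩
      · -- w' is all zeros
        subst hρ0
        rw [List.append_nil] at hwdec
        have hw' : w' = Zr e := by
          rw [← List.reverse_reverse w', hwdec, Zr_reverse]
        rw [hwdec] at hδ'
        rw [hwdec]
        rcases lt_trichotomy e m with hem | hem | hem
        · -- e < m : positional win with letter b
          calc (Zr m ++ b :: t : List ℕ)
              = Zr e ++ 0 :: (Zr (m - e - 1) ++ b :: t) := by rw [Zsplit hem]; simp
            _ < Zr e ++ b :: (Zr m ++ v.reverse) := lt_mid _ hb1 _ _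
        · -- e = m : reduce to v < v.reverse via strict bracelet property of α
          have ht2 : t = Zr m ++ v := by rw [ht, hw', hem]
          rw [hem] at hδ'
          rw [hem, ht2]
          rw [ht2] at hδ'
          have hvlt : v < v.reverse := by
            apply lt_cancel (p := Zr m ++ a :: Zr m)
            simpa [List.append_assoc] using hδ'
          have := lt_app (Zr m ++ b :: Zr m) hvlt
          simpa [List.append_assoc] using this
        · -- e > m : contradiction
          exfalso
          have hlt2 : Zr e ++ a :: (Zr m ++ v.reverse) < Zr m ++ a :: t := by
            calc Zr e ++ a :: (Zr m ++ v.reverse)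
                = Zr m ++ 0 :: (Zr (e - m - 1) ++ a :: (Zr m ++ v.reverse)) := by
                  rw [Zsplit hem]; simp
              _ < Zr m ++ a :: t := lt_mid _ ha0 _ _
          exact absurd hδ' (not_lt.mpr hlt2.le)
      · -- w'.reverse = Zr e ++ c' :: s, c' > 0
        subst hρc
        have eA : (Zr e ++ c' :: s) ++ a :: (Zr m ++ v.reverse)
            = Zr e ++ c' :: (s ++ a :: (Zr m ++ v.reverse)) := by simp
        have eB : (Zr e ++ c' :: s) ++ b :: (Zr m ++ v.reverse)
            = Zr e ++ c' :: (s ++ b :: (Zr m ++ v.reverse)) := by simp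
        rw [hwdec, eA] at hδ'
        rw [hwdec, eB]
        rcases lt_trichotomy e m with hem | hem | hem
        · calc (Zr m ++ b :: t : List ℕ)
              = Zr e ++ 0 :: (Zr (m - e - 1) ++ b :: t) := by rw [Zsplit hem]; simp
            _ < Zr e ++ c' :: (s ++ b :: (Zr m ++ v.reverse)) := lt_mid _ hc' _ _
        · rw [hem] at hδ'
          rw [hem]
          have hac : a ≤ c' := le_mid_head (le_of_lt hδ')
          exact lt_mid _ (lt_of_lt_of_le hba hac) _ _
        · exfalso
          have hlt2 : Zr e ++ c' :: (s ++ a :: (Zr m ++ v.reverse)) < Zr m ++ a :: t := by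
            calc Zr e ++ c' :: (s ++ a :: (Zr m ++ v.reverse))
                = Zr m ++ 0 :: (Zr (e - m - 1) ++ c' :: (s ++ a :: (Zr m ++ v.reverse))) := by
                  rw [Zsplit hem]; simp
              _ < Zr m ++ a :: t := lt_mid _ ha0 _ _
          exact absurd hδ' (not_lt.mpr hlt2.le)

end Core

end AsymAux

open AsymAux in
/-- Decrementing the first nonzero symbol (when it exceeds 1) of an asymmetric
bracelet yields an asymmetric bracelet. -/
theorem firstNonMin_isAsymBracelet (m a : ℕ) (t : List ℕ) (ha : 1 < a)
    (hb : IsAsymBracelet (List.replicate m 0 ++ a :: t)) :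
    IsAsymBracelet (List.replicate m 0 ++ (a - 1) :: t) := by
  obtain ⟨⟨Hnec, Hrev⟩, Hasym⟩ := hb
  have hZr : List.replicate m 0 = Zr m := rfl
  rw [hZr] at Hnec Hrev Hasym ⊢
  have hb1 : 0 < a - 1 := by omega
  have hba : a - 1 < a := by omega
  -- split forms of the hypotheses on α
  have H1 : ∀ u v : List ℕ, u ++ v = Zr m ++ a :: t → (Zr m ++ a :: t : List ℕ) ≤ v ++ u := by
    intro u v h
    have h2 := Hnec u.length
    rwa [rotate_of_split h] at h2
  have H2 : ∀ u v : List ℕ, u ++ v = Zr m ++ a :: t →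
      (Zr m ++ a :: t : List ℕ) ≤ u.reverse ++ v.reverse := by
    intro u v h
    have hsp : v.reverse ++ u.reverse = (Zr m ++ a :: t : List ℕ).reverse := by
      rw [← h, List.reverse_append]
    have h2 := Hrev v.reverse.length
    rwa [rotate_of_split hsp] at h2
  have Hns : ∀ x y : List ℕ, x ++ y = Zr m ++ a :: t →
      y ++ x ≠ (Zr m ++ a :: t : List ℕ).reverse := by
    intro x y h hcon
    exact Hasym ⟨x.length, by rw [rotate_of_split h, hcon]⟩
  have H2s : ∀ u v : List ℕ, u ++ v = Zr m ++ a :: t →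
      (Zr m ++ a :: t : List ℕ) < u.reverse ++ v.reverse := by
    intro u v h
    refine lt_of_le_of_ne (H2 u v h) ?_
    intro he
    refine Hns u v h ?_
    rw [he, List.reverse_append, List.reverse_reverse, List.reverse_reverse]
  have G1 := core_neck hb1 hba H1
  have G2 := core_rev hb1 hba H2s Hns
  set β : List ℕ := Zr m ++ (a - 1) :: t with hβ
  have hlen : 0 < β.length := by
    rw [hβ]
    simp only [Zr, List.length_append, List.length_replicate, List.length_cons]
    omega
  refine ⟨⟨?_, ?_⟩, ?_⟩
  · intro i
    rw [← List.rotate_mod]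
    have hmod : i % β.length ≤ β.length := le_of_lt (Nat.mod_lt _ hlen)
    rw [List.rotate_eq_drop_append_take hmod]
    exact G1 _ _ (List.take_append_drop _ _)
  · intro i
    rw [← List.rotate_mod]
    have hlen' : 0 < β.reverse.length := by simpa using hlen
    have hmod : i % β.reverse.length ≤ β.reverse.length := le_of_lt (Nat.mod_lt _ hlen')
    rw [List.rotate_eq_drop_append_take hmod]
    set j := i % β.reverse.length
    have hsplit : (β.reverse.drop j).reverse ++ (β.reverse.take j).reverse = β := by
      rw [← List.reverse_append, List.take_append_drop, List.reverse_reverse]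
    have h2 := G2 _ _ hsplit
    rw [List.reverse_reverse, List.reverse_reverse] at h2
    exact le_of_lt h2
  · intro hsym
    obtain ⟨i, hi⟩ := hsym
    rw [← List.rotate_mod] at hi
    have hmod : i % β.length ≤ β.length := le_of_lt (Nat.mod_lt _ hlen)
    rw [List.rotate_eq_drop_append_take hmod] at hi
    set j := i % β.length
    have h2 := G2 _ _ (List.take_append_drop j β)
    have hβ2 : β = (β.take j).reverse ++ (β.drop j).reverse := by
      calc β = β.reverse.reverse := (List.reverse_reverse β).symm
        _ = (β.drop j ++ β.take j).reverse := by rw [← hi]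
        _ = (β.take j).reverse ++ (β.drop j).reverse := by rw [List.reverse_append]
    rw [← hβ2] at h2
    exact absurd h2 (lt_irrefl β)
end

section
/- If α ≠ (k−1)ⁿ is a bracelet over {0,…,k−1} and j is the index of the last symbol of α that is not k−1, then the word obtained by incrementing a_j (i.e., a₁⋯a_{j−1}(a_j+1)(k−1)^{n−j}) is again a bracelet. -/
section BraceletAux

open List

private lemma cons_lt_iff' {a b : ℕ} {l₁ l₂ : List ℕ} :
    a :: l₁ < b :: l₂ ↔ a < b ∨ (a = b ∧ l₁ < l₂) := by
  constructor
  · intro h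
    cases h with
    | cons h => exact Or.inr ⟨rfl, h⟩
    | rel h => exact Or.inl h
  · rintro (h | ⟨rfl, h⟩)
    · exact List.Lex.rel h
    · exact List.Lex.cons h

private lemma cons_le_iff' {a b : ℕ} {l₁ l₂ : List ℕ} :
    a :: l₁ ≤ b :: l₂ ↔ a < b ∨ (a = b ∧ l₁ ≤ l₂) := by
  rw [le_iff_lt_or_eq, le_iff_lt_or_eq, cons_lt_iff', List.cons.injEq]
  tauto

private lemma lt_append' : ∀ (u v A B : List ℕ), u.length = v.length → u < v → u ++ A < v ++ B := by
  intro u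
  induction u with
  | nil => intro v A B h hlt; cases v with
    | nil => exact absurd hlt (lt_irrefl _)
    | cons c v => simp at h
  | cons b u ih =>
    intro v A B h hlt
    cases v with
    | nil => simp at h
    | cons c v =>
      rcases cons_lt_iff'.mp hlt with h' | ⟨rfl, h'⟩
      · exact List.Lex.rel h'
      · exact List.Lex.cons (ih v A B (by simpa using h) h')

private lemma append_le_left_iff' : ∀ (u A B : List ℕ), u ++ A ≤ u ++ B ↔ A ≤ B := by
  intro u
  induction u with
  | nil => simp
  | cons b u ih => intro A B; simp only [cons_append, cons_le_iff', lt_irrefl, false_or,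
      true_and, ih]

private lemma le_replicate' (M : ℕ) :
    ∀ (w : List ℕ), (∀ c ∈ w, c ≤ M) → w ≤ List.replicate w.length M := by
  intro w
  induction w with
  | nil => simp
  | cons c w ih =>
    intro h
    rw [length_cons, replicate_succ, cons_le_iff']
    rcases lt_or_eq_of_le (h c (by simp)) with h' | h'
    · exact Or.inl h'
    · exact Or.inr ⟨h', ih fun x hx => h x (by simp [hx])⟩

private lemma inc_le' (a : ℕ) : ∀ (x β t y : List ℕ), x.length ≤ β.length →
    β ++ a :: t ≤ x ++ a :: y → β ++ (a+1) :: t ≤ x ++ (a+1) :: y := by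
  intro x
  induction x with
  | nil =>
    intro β t y _ h
    cases β with
    | nil =>
      simp only [nil_append] at h ⊢
      rcases cons_le_iff'.mp h with h' | ⟨_, h'⟩
      · exact absurd h' (lt_irrefl _)
      · exact cons_le_iff'.mpr (Or.inr ⟨rfl, h'⟩)
    | cons b β' =>
      simp only [nil_append, cons_append] at h ⊢
      rcases cons_le_iff'.mp h with h' | ⟨rfl, h'⟩
      · exact le_of_lt (List.Lex.rel (by omega))
      · exact le_of_lt (List.Lex.rel (by omega))
  | cons c x' ih =>
    intro β t y hlen h
    cases β with
    | nil => simp at hlen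
    | cons b β' =>
      simp only [cons_append] at h ⊢
      rcases cons_le_iff'.mp h with h' | ⟨rfl, h'⟩
      · exact le_of_lt (List.Lex.rel h')
      · exact cons_le_iff'.mpr (Or.inr ⟨rfl, ih β' t y (by simpa using hlen) h'⟩)

private lemma hard2' (M a m : ℕ) (z : List ℕ) (hz : ∀ c ∈ z, c ≤ M) (he : z.length < m)
    (haM : a + 1 ≤ M) :
    z.reverse ++ (a+1) :: List.replicate m M ≤ List.replicate m M ++ (a+1) :: z := by
  set e := z.length with hez
  have hsplit : List.replicate m M = List.replicate e M ++ List.replicate (m - e) M := by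
    rw [← replicate_add]; congr 1; omega
  have hle : z.reverse ≤ List.replicate e M := by
    have := le_replicate' M z.reverse (by simpa using hz)
    simpa using this
  rcases lt_or_eq_of_le hle with hlt | heq
  · rw [hsplit, append_assoc]
    exact le_of_lt (lt_append' _ _ _ _ (by simp [hez]) hlt)
  · have hzrep : z = List.replicate e M := by
      have := congrArg List.reverse heq
      simpa [reverse_replicate] using this
    rw [heq, hzrep, hsplit, append_assoc, append_le_left_iff']
    have hm1 : m - e = (m - e - 1) + 1 := by omega
    rcases lt_or_eq_of_le haM with h' | h'
    · rw [hm1, replicate_succ, cons_append]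
      exact le_of_lt (cons_lt_iff'.mpr (Or.inl h'))
    · rw [h']
      apply le_of_eq
      have hmid : List.replicate (m-e) M ++ M :: List.replicate e M = M :: List.replicate m M := by
        rw [show (M : ℕ) :: List.replicate e M = List.replicate (e+1) M from
          replicate_succ.symm,
          ← replicate_add, show m - e + (e+1) = m + 1 by omega, replicate_succ]
      rw [hmid, ← replicate_add, show e + (m - e) = m by omega]

private lemma hard' (M a m : ℕ) (x z : List ℕ) (hz : ∀ c ∈ z, c ≤ M) (he : z.length < m)
    (haM : a + 1 ≤ M)
    (h : x.reverse ++ (z.reverse ++ a :: List.replicate m M) ≤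
        x ++ (List.replicate m M ++ a :: z)) :
    x.reverse ++ (z.reverse ++ (a+1) :: List.replicate m M) ≤
        x ++ (List.replicate m M ++ (a+1) :: z) := by
  rcases lt_trichotomy x.reverse x with hx | hx | hx
  · exact le_of_lt (lt_append' _ _ _ _ (by simp) hx)
  · rw [hx] at h ⊢
    rw [append_le_left_iff'] at h ⊢
    exact hard2' M a m z hz he haM
  · exfalso
    have h2 : x ++ (List.replicate m M ++ a :: z) <
        x.reverse ++ (z.reverse ++ a :: List.replicate m M) :=
      lt_append' _ _ _ _ (by simp) hx
    exact absurd (lt_of_le_of_lt h h2) (lt_irrefl _)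

private lemma rot_small' (c M m i : ℕ) (β : List ℕ) (hi : i ≤ β.length) :
    (β ++ c :: List.replicate m M).rotate i
      = β.drop i ++ c :: (List.replicate m M ++ β.take i) := by
  rw [List.rotate_eq_drop_append_take (by simp; omega)]
  rw [List.drop_append, List.take_append]
  rw [Nat.sub_eq_zero_of_le hi]
  simp

private lemma rot_big' (c M m i : ℕ) (β : List ℕ) (h1 : β.length < i)
    (h2 : i < β.length + (m+1)) :
    ∃ w, (β ++ c :: List.replicate m M).rotate i = M :: w := by
  rw [List.rotate_eq_drop_append_take (by simp; omega)]
  rw [List.drop_append]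
  rw [List.drop_eq_nil_of_le (le_of_lt h1)]
  rw [show i - β.length = (i - β.length - 1) + 1 by omega, List.drop_succ_cons,
    List.drop_replicate]
  rw [show m - (i - β.length - 1) = (m - (i - β.length - 1) - 1) + 1 by omega,
    List.replicate_succ]
  exact ⟨List.replicate (m - (i - β.length - 1) - 1) M ++
    (β ++ c :: List.replicate m M).take i, by simp⟩

private lemma rev_eq' (c M m : ℕ) (β : List ℕ) :
    (β ++ c :: List.replicate m M).reverse = List.replicate m M ++ c :: β.reverse := by
  simp

private lemma revrot_small' (c M m i : ℕ) (v : List ℕ) (hi : i < m) :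
    ∃ w, (List.replicate m M ++ c :: v).rotate i = M :: w := by
  rw [List.rotate_eq_drop_append_take (by simp; omega)]
  rw [List.drop_append]
  simp only [List.length_replicate, List.drop_replicate]
  rw [Nat.sub_eq_zero_of_le (le_of_lt hi), List.drop_zero]
  rw [show m - i = (m - i - 1) + 1 by omega, List.replicate_succ]
  exact ⟨List.replicate (m - i - 1) M ++ (c :: v) ++
    (List.replicate m M ++ c :: v).take i, by simp⟩

private lemma revrot_mid' (c M m : ℕ) (v : List ℕ) :
    (List.replicate m M ++ c :: v).rotate m = c :: (v ++ List.replicate m M) := by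
  rw [List.rotate_eq_drop_append_take (by simp)]
  rw [List.drop_append, List.take_append]
  simp

private lemma revrot_big' (c M m i : ℕ) (v : List ℕ) (h1 : m < i) (h2 : i < m + 1 + v.length) :
    (List.replicate m M ++ c :: v).rotate i
      = v.drop (i - m - 1) ++ (List.replicate m M ++ c :: v.take (i - m - 1)) := by
  rw [List.rotate_eq_drop_append_take (by simp; omega)]
  rw [List.drop_append, List.take_append]
  simp only [List.length_replicate, List.drop_replicate, List.take_replicate]
  rw [Nat.sub_eq_zero_of_le (le_of_lt h1), Nat.min_eq_right (le_of_lt h1)]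
  rw [show i - m = (i - m - 1) + 1 by omega, List.drop_succ_cons, List.take_succ_cons]
  simp

end BraceletAux

/-- Incrementing the last non-(k-1) symbol of a bracelet (≠ (k-1)ⁿ) over
`{0,…,k-1}` yields a bracelet. -/
theorem lastNonMax_isBracelet (k : ℕ) (β : List ℕ) (a m : ℕ)
    (hmem : ∀ x ∈ β ++ a :: List.replicate m (k - 1), x < k)
    (ha : a < k - 1)
    (hb : IsBracelet (β ++ a :: List.replicate m (k - 1))) :
    IsBracelet (β ++ (a + 1) :: List.replicate m (k - 1)) := by
  set M := k - 1 with hMdef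
  obtain ⟨h1, h2⟩ := hb
  have haM : a + 1 ≤ M := ha
  have hβmem : ∀ c ∈ β, c ≤ M := by
    intro c hc
    have := hmem c (by simp [hc])
    omega
  have hba : ∀ b βt, β = b :: βt → b ≤ a := by
    intro b βt hβ
    have h := h1 β.length
    rw [rot_small' a M m β.length β le_rfl, List.drop_length, List.take_length,
      List.nil_append] at h
    rw [hβ, List.cons_append] at h
    rcases cons_le_iff'.mp h with h' | ⟨h', _⟩ <;> omega
  by_cases hrep : β = [] ∧ a + 1 = M
  · obtain ⟨hβnil, hM1⟩ := hrep
    subst hβnil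
    have hre : ([] : List ℕ) ++ (a+1) :: List.replicate m M = List.replicate (m+1) M := by
      rw [List.nil_append, hM1, List.replicate_succ]
    rw [hre]
    constructor <;> intro i
    · rw [List.rotate_replicate]
    · rw [List.reverse_replicate, List.rotate_replicate]
  · have hhead : ∃ b u, β ++ (a+1) :: List.replicate m M = b :: u ∧ b < M := by
      cases hc : β with
      | nil =>
        refine ⟨a+1, _, by rw [List.nil_append], ?_⟩
        have : a + 1 ≠ M := fun hcon => hrep ⟨hc, hcon⟩
        omega
      | cons b βt =>
        refine ⟨b, _, by rw [List.cons_append], ?_⟩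
        have := hba b βt hc
        omega
    constructor
    · -- necklace part
      intro i0
      rw [← List.rotate_mod]
      set i := i0 % (β ++ (a + 1) :: List.replicate m M).length with hidef
      have hi : i < β.length + (m + 1) := by
        have hlen' : (β ++ (a + 1) :: List.replicate m M).length = β.length + (m + 1) := by
          simp
        rw [hidef, hlen']
        exact Nat.mod_lt _ (by omega)
      by_cases hij : i ≤ β.length
      · rw [rot_small' (a+1) M m i β hij]
        refine inc_le' a (β.drop i) β _ _ (by simp) ?_
        have h := h1 i
        rwa [rot_small' a M m i β hij] at h
      · push_neg at hij
        obtain ⟨w, hw⟩ := rot_big' (a+1) M m i β hij hi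
        rw [hw]
        obtain ⟨b, u, hbu, hbM⟩ := hhead
        rw [hbu]
        exact le_of_lt (List.Lex.rel hbM)
    · -- reverse part
      intro i0
      rw [← List.rotate_mod, rev_eq']
      set i := i0 % (List.replicate m M ++ (a+1) :: β.reverse).length with hidef
      have hi : i < β.length + (m + 1) := by
        have hlen' : (List.replicate m M ++ (a+1) :: β.reverse).length
            = β.length + (m + 1) := by simp; omega
        rw [hidef, hlen']
        exact Nat.mod_lt _ (by omega)
      rcases lt_trichotomy i m with him | him | him
      · obtain ⟨w, hw⟩ := revrot_small' (a+1) M m i β.reverse him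
        rw [hw]
        obtain ⟨b, u, hbu, hbM⟩ := hhead
        rw [hbu]
        exact le_of_lt (List.Lex.rel hbM)
      · rw [him, revrot_mid']
        cases hc : β with
        | nil =>
          subst hc
          simp
        | cons b βt =>
          have hbla := hba b βt hc
          subst hc
          rw [List.cons_append]
          exact le_of_lt (List.Lex.rel (by omega))
      · have hvlen : i < m + 1 + β.reverse.length := by
          rw [List.length_reverse]; omega
        rw [revrot_big' (a+1) M m i β.reverse him hvlen]
        have h := h2 i
        rw [rev_eq', revrot_big' a M m i β.reverse him hvlen] at h
        set e := i - m - 1 with hedef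
        have hej : e < β.length := by omega
        by_cases hme : m ≤ e
        · rw [← List.append_assoc] at h ⊢
          refine inc_le' a _ β _ _ ?_ h
          simp only [List.length_append, List.length_drop, List.length_reverse,
            List.length_replicate]
          omega
        · push_neg at hme
          set x := β.reverse.drop e with hxdef
          set z := β.reverse.take e with hzdef
          have hβeq : β = x.reverse ++ z.reverse := by
            rw [hxdef, hzdef, ← List.reverse_append, List.take_append_drop,
              List.reverse_reverse]
          have hz : ∀ c ∈ z, c ≤ M := by
            intro c hc
            exact hβmem c (List.mem_reverse.mp (List.take_subset e β.reverse hc))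
          have hzlen : z.length < m := by
            rw [hzdef, List.length_take, List.length_reverse]
            omega
          rw [hβeq, List.append_assoc] at h ⊢
          exact hard' M a m x z hz hzlen haM h
end

section
/- Let α = a₁⋯aₙ be an asymmetric bracelet, j the index of the last symbol that is not k−1, and ℓ the index of the second-last symbol that is not k−1. If aₙ < k−1, then lastNonMax(α) := a₁⋯a_{j−1}(a_j+1)(k−1)^{n−j} is an asymmetric bracelet. -/
private lemma lexB1 : ∀ (u β v : List ℕ) (a : ℕ),
    β.length = u.length + v.length →
    List.Lex (· < ·) (β ++ [a]) (u ++ a :: v) →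
    List.Lex (· < ·) (β ++ [a + 1]) (u ++ (a + 1) :: v) := by
  intro u
  induction u with
  | nil =>
    intro β v a hlen h
    cases β with
    | nil =>
      have hv : v = [] := by simpa using hlen.symm
      subst hv
      simp only [List.nil_append] at h
      cases h with
      | rel hr => exact absurd hr (lt_irrefl _)
      | cons h' => cases h'
    | cons b β' =>
      simp only [List.cons_append, List.nil_append] at h ⊢
      cases h with
      | rel hr => exact List.Lex.rel (by omega)
      | cons h' => exact List.Lex.rel (Nat.lt_succ_self a)
  | cons c u' ih =>
    intro β v a hlen h
    cases β with
    | nil => simp only [List.length_nil, List.length_cons] at hlen; omega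
    | cons b β' =>
      simp only [List.cons_append] at h ⊢
      cases h with
      | rel hr => exact List.Lex.rel hr
      | cons h' =>
        refine List.Lex.cons (ih β' v a ?_ h')
        simp only [List.length_cons] at hlen
        omega

private lemma lexB2 : ∀ (u β v : List ℕ) (a : ℕ),
    β ++ [a] = u ++ a :: v → v ≠ [] →
    List.Lex (· < ·) (β ++ [a + 1]) (u ++ (a + 1) :: v) := by
  intro u
  induction u with
  | nil =>
    intro β v a heq hv
    cases β with
    | nil =>
      simp only [List.nil_append] at heq
      injection heq with h1 h2
      exact absurd h2.symm hv
    | cons b β' =>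
      simp only [List.cons_append, List.nil_append] at heq ⊢
      injection heq with h1 h2
      subst h1
      exact List.Lex.rel (Nat.lt_succ_self b)
  | cons c u' ih =>
    intro β v a heq hv
    cases β with
    | nil =>
      simp only [List.nil_append, List.cons_append] at heq
      injection heq with h1 h2
      exact absurd h2 (by simp)
    | cons b β' =>
      simp only [List.cons_append] at heq ⊢
      injection heq with h1 h2
      subst h1
      exact List.Lex.cons (ih β' v a h2 hv)

private lemma lexStep (u β v : List ℕ) (a : ℕ)
    (hlen : β.length = u.length + v.length)
    (hle : β ++ [a] ≤ u ++ a :: v) (hv : v ≠ []) :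
    List.Lex (· < ·) (β ++ [a + 1]) (u ++ (a + 1) :: v) := by
  rcases lt_or_eq_of_le hle with h | h
  · exact lexB1 u β v a hlen h
  · exact lexB2 u β v a h hv

/-- Case (i) of Lemma on `lastNonMax`: if the last symbol of an asymmetric
bracelet is `< k-1`, incrementing it yields an asymmetric bracelet. -/
theorem lastNonMax_case_lastSymbol (k : ℕ) (β : List ℕ) (a : ℕ)
    (hmem : ∀ x ∈ β ++ [a], x < k)
    (ha : a < k - 1)
    (hb : IsAsymBracelet (β ++ [a])) :
    IsAsymBracelet (β ++ [a + 1]) := by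
  obtain ⟨⟨hneck, hrev⟩, hasym⟩ := hb
  have hβ : β ≠ [] := by
    rintro rfl
    exact hasym ⟨0, by simp⟩
  have hβpos : 0 < β.length := List.length_pos_iff.mpr hβ
  have hlenα' : (β ++ [a + 1]).length = β.length + 1 := by simp
  -- necklace condition
  have neck' : ∀ i, β ++ [a + 1] ≤ (β ++ [a + 1]).rotate i := by
    have key : ∀ j, j < β.length + 1 → β ++ [a + 1] ≤ (β ++ [a + 1]).rotate j := by
      intro j hjn
      rcases Nat.eq_zero_or_pos j with h0 | hpos
      · rw [h0, List.rotate_zero]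
      · have hjβ : j ≤ β.length := by omega
        have hrot : ∀ x : ℕ, (β ++ [x]).rotate j = β.drop j ++ x :: β.take j := by
          intro x
          rw [List.rotate_eq_drop_append_take (by simp; omega),
              List.drop_append_of_le_length hjβ, List.take_append_of_le_length hjβ]
          simp
        rw [hrot]
        have hle := hneck j
        rw [hrot a] at hle
        have hlen2 : β.length = (β.drop j).length + (β.take j).length := by
          rw [List.length_drop, List.length_take]; omega
        have hvne : β.take j ≠ [] := by
          simp only [ne_eq, List.take_eq_nil_iff]
          push_neg
          exact ⟨by omega, hβ⟩
        exact le_of_lt (lexStep _ _ _ _ hlen2 hle hvne)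
    intro i
    have hmod : (β ++ [a + 1]).rotate i = (β ++ [a + 1]).rotate (i % (β.length + 1)) := by
      conv_lhs => rw [← List.rotate_mod]
      rw [hlenα']
    rw [hmod]
    exact key _ (Nat.mod_lt _ (by omega))
  -- strict inequality against all rotations of the reversal
  have rev' : ∀ i, List.Lex (· < ·) (β ++ [a + 1]) ((β ++ [a + 1]).reverse.rotate i) := by
    have hrevx : ∀ x : ℕ, (β ++ [x]).reverse = x :: β.reverse := by intro x; simp
    have key : ∀ j, j < β.length + 1 →
        List.Lex (· < ·) (β ++ [a + 1]) ((β ++ [a + 1]).reverse.rotate j) := by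
      intro j hjn
      cases j with
      | zero =>
        rw [List.rotate_zero, hrevx]
        have hle := hrev 0
        rw [List.rotate_zero, hrevx] at hle
        have hvne : β.reverse ≠ [] := by simpa using hβ
        have hlen2 : β.length = ([] : List ℕ).length + β.reverse.length := by simp
        exact lexStep [] β β.reverse a hlen2 hle hvne
      | succ m =>
        have hm : m + 1 ≤ β.length := by omega
        have hrot : ∀ x : ℕ,
            ((β ++ [x]).reverse).rotate (m + 1)
              = β.reverse.drop m ++ x :: β.reverse.take m := by
          intro x
          rw [hrevx, List.rotate_eq_drop_append_take
            (by rw [List.length_cons, List.length_reverse]; omega)]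
          rw [List.drop_succ_cons, List.take_succ_cons]
        rw [hrot]
        have hle := hrev (m + 1)
        rw [hrot a] at hle
        have hlen2 : β.length = (β.reverse.drop m).length + (β.reverse.take m).length := by
          rw [List.length_drop, List.length_take, List.length_reverse]; omega
        cases Nat.eq_zero_or_pos m with
        | inr hmpos =>
          have hvne : β.reverse.take m ≠ [] := by
            simp only [ne_eq, List.take_eq_nil_iff]
            push_neg
            exact ⟨by omega, by simpa using hβ⟩
          exact lexStep _ _ _ _ hlen2 hle hvne
        | inl hm0 =>
          subst hm0
          simp only [List.drop_zero, List.take_zero] at hle hlen2 ⊢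
          rcases lt_or_eq_of_le hle with hlt | heq
          · exact lexB1 _ _ _ _ hlen2 hlt
          · -- equality forces β = β.reverse, hence α is symmetric: contradiction
            exfalso
            have hβrev : β = β.reverse := List.append_left_injective [a] heq
            have hsym : (β ++ [a]).reverse = (β ++ [a]).rotate β.length := by
              rw [List.rotate_eq_drop_append_take (by simp),
                  List.drop_left, List.take_left, List.reverse_append]
              simp [← hβrev]
            exact hasym ⟨β.length, hsym⟩
    intro i
    have hrevlen : (β ++ [a + 1]).reverse.length = β.length + 1 := by simp
    have hmod : (β ++ [a + 1]).reverse.rotate i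
        = (β ++ [a + 1]).reverse.rotate (i % (β.length + 1)) := by
      conv_lhs => rw [← List.rotate_mod]
      rw [hrevlen]
    rw [hmod]
    exact key _ (Nat.mod_lt _ (by omega))
  refine ⟨⟨neck', fun i => le_of_lt (rev' i)⟩, ?_⟩
  rintro ⟨i, hi⟩
  have hrot : (β ++ [a + 1]) ~r (β ++ [a + 1]).reverse := ⟨i, hi.symm⟩
  obtain ⟨j, hj⟩ := hrot.symm
  have h := rev' j
  rw [hj] at h
  exact absurd (show (β ++ [a + 1]) < (β ++ [a + 1]) from h) (lt_irrefl _)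
end

section
/- Let α = a₁⋯aₙ be an asymmetric bracelet over {0,…,k−1}, with j the index of the last non-(k−1) symbol and ℓ the index of the second-last non-(k−1) symbol. If a_j < k−2, then a₁⋯a_{j−1}(a_j+1)(k−1)^{n−j} is an asymmetric bracelet. -/
lemma lex_lt_intro (x y : List ℕ) (q : ℕ) (hq : q < x.length) (hq' : q < y.length)
    (heq : ∀ i < q, x.getD i 0 = y.getD i 0) (hlt : x.getD q 0 < y.getD q 0) : x < y := by
  show List.Lex (· < ·) x y
  induction x generalizing y q with
  | nil => simp at hq
  | cons c x ih =>
    cases y with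
    | nil => simp at hq'
    | cons d y =>
      cases q with
      | zero =>
        simp only [List.getD_cons_zero] at hlt
        exact List.Lex.rel hlt
      | succ q =>
        have h0 := heq 0 (Nat.succ_pos q)
        simp only [List.getD_cons_zero] at h0
        subst h0
        exact List.Lex.cons (ih y q (by simpa using hq) (by simpa using hq')
          (fun i hi => by simpa using heq (i+1) (by omega))
          (by simpa using hlt))

lemma lex_lt_elim (x y : List ℕ) (h : x.length = y.length) (hxy : x < y) :
    ∃ q, q < x.length ∧ (∀ i < q, x.getD i 0 = y.getD i 0) ∧ x.getD q 0 < y.getD q 0 := by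
  have hl : List.Lex (· < ·) x y := hxy
  induction hl with
  | nil => simp at h
  | @rel a l₁ b l₂ hab => exact ⟨0, by simp, by simp, by simpa using hab⟩
  | @cons a l₁ l₂ hlex ih =>
    obtain ⟨q, hq, he, hlt⟩ := ih (by simpa using h) hlex
    refine ⟨q + 1, by simpa using hq, fun i hi => ?_, by simpa using hlt⟩
    cases i with
    | zero => simp
    | succ i => simpa using he i (by omega)

lemma lex_le_intro (x y : List ℕ) (h : x.length = y.length)
    (H : ∀ q, q < x.length → (∀ i < q, x.getD i 0 = y.getD i 0) → x.getD q 0 ≤ y.getD q 0) :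
    x ≤ y := by
  by_contra hc
  obtain ⟨q, hq, he, hlt⟩ := lex_lt_elim y x h.symm (lt_of_not_ge hc)
  have := H q (by omega) (fun i hi => (he i hi).symm)
  omega

lemma getD_ext (x y : List ℕ) (h : x.length = y.length)
    (H : ∀ i < x.length, x.getD i 0 = y.getD i 0) : x = y := by
  refine List.ext_getElem h (fun i h1 h2 => ?_)
  have := H i h1
  rwa [List.getD_eq_getElem _ _ h1, List.getD_eq_getElem _ _ h2] at this

lemma core_lt {n j a K : ℕ} (hj : j < n) (haK : a + 1 < K)
    {x x' y y' : List ℕ}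
    (hxl : x.length = n) (hx'l : x'.length = n) (hyl : y.length = n) (hy'l : y'.length = n)
    {σ : ℕ → ℕ} (hσ : ∀ i < n, σ i < n)
    (hxj : x.getD j 0 = a)
    (hxtop : ∀ i, j < i → i < n → x.getD i 0 = K)
    (hxle : ∀ i < n, x.getD i 0 ≤ K)
    (hx' : ∀ i < n, x'.getD i 0 = if i = j then a + 1 else x.getD i 0)
    (hy : ∀ i < n, y.getD i 0 = x.getD (σ i) 0)
    (hy' : ∀ i < n, y'.getD i 0 = x'.getD (σ i) 0)
    (hxy : x < y) :
    x' < y' ∨ ((∀ i < j, x.getD (σ i) 0 = x.getD i 0) ∧ x.getD (σ j) 0 = a + 1) := by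
  obtain ⟨q, hq, he, hlt⟩ := lex_lt_elim x y (by omega) hxy
  rw [hxl] at hq
  have hqj : q ≤ j := by
    by_contra hc
    push_neg at hc
    have h1 : x.getD q 0 = K := hxtop q hc hq
    have h2 : y.getD q 0 = x.getD (σ q) 0 := hy q hq
    have h3 : x.getD (σ q) 0 ≤ K := hxle _ (hσ q hq)
    omega
  rcases lt_or_eq_of_le hqj with hqlt | hqeq
  · -- q < j : always x' < y'
    left
    by_cases hP : ∃ p, p ≤ q ∧ σ p = j
    · classical
      obtain ⟨hpq, hpj⟩ := Nat.find_spec hP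
      set p := Nat.find hP with hpdef
      have hmin : ∀ i < p, ¬(i ≤ q ∧ σ i = j) := fun i hi => Nat.find_min hP hi
      have hpn : p < n := by omega
      refine lex_lt_intro x' y' p (by omega) (by omega) (fun i hi => ?_) ?_
      · have hin : i < n := by omega
        have hσi : σ i ≠ j := fun hc => hmin i hi ⟨by omega, hc⟩
        rw [hx' i hin, if_neg (by omega), hy' i hin, hx' (σ i) (hσ i hin), if_neg hσi,
          ← hy i hin, ← he i (by omega)]
      · have hyp : y.getD p 0 = a := by rw [hy p hpn, hpj, hxj]
        have hxp : x.getD p 0 ≤ a := by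
          rcases Nat.lt_or_ge p q with h | h
          · have h1 := he p h
            omega
          · have h2 : p = q := by omega
            rw [h2]
            rw [h2] at hyp
            omega
        rw [hx' p hpn, if_neg (by omega), hy' p hpn, hpj, hx' j hj, if_pos rfl]
        omega
    · push_neg at hP
      refine lex_lt_intro x' y' q (by omega) (by omega) (fun i hi => ?_) ?_
      · have hin : i < n := by omega
        rw [hx' i hin, if_neg (by omega), hy' i hin, hx' (σ i) (hσ i hin),
          if_neg (hP i (by omega)), ← hy i hin, ← he i hi]
      · rw [hx' q hq, if_neg (by omega), hy' q hq, hx' (σ q) (hσ q hq),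
          if_neg (hP q le_rfl), ← hy q hq]
        exact hlt
  · -- q = j
    rw [hqeq] at he hlt
    rw [hxj] at hlt
    have hxσq : a < x.getD (σ j) 0 := by
      have := hy j hj
      omega
    by_cases hP : ∃ p, p < j ∧ σ p = j
    · left
      classical
      obtain ⟨hpq, hpj⟩ := Nat.find_spec hP
      set p := Nat.find hP with hpdef
      have hmin : ∀ i < p, ¬(i < j ∧ σ i = j) := fun i hi => Nat.find_min hP hi
      have hpn : p < n := by omega
      refine lex_lt_intro x' y' p (by omega) (by omega) (fun i hi => ?_) ?_
      · have hin : i < n := by omega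
        have hσi : σ i ≠ j := fun hc => hmin i hi ⟨by omega, hc⟩
        rw [hx' i hin, if_neg (by omega), hy' i hin, hx' (σ i) (hσ i hin), if_neg hσi,
          ← hy i hin, ← he i (by omega)]
      · have hxp : x.getD p 0 = a := by
          have h1 := he p hpq
          have h2 := hy p hpn
          rw [hpj] at h2
          omega
        rw [hx' p hpn, if_neg (by omega), hy' p hpn, hpj, hx' j hj, if_pos rfl]
        omega
    · push_neg at hP
      have hσqj : σ j ≠ j := by
        intro hc
        rw [hc, hxj] at hxσq
        omega
      rcases Nat.lt_or_ge (a + 1) (x.getD (σ j) 0) with hbig | hsmall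
      · left
        refine lex_lt_intro x' y' j (by omega) (by omega) (fun i hi => ?_) ?_
        · have hin : i < n := by omega
          rw [hx' i hin, if_neg (by omega), hy' i hin, hx' (σ i) (hσ i hin),
            if_neg (hP i hi), ← hy i hin, ← he i hi]
        · rw [hx' j hj, if_pos rfl, hy' j hj, hx' (σ j) (hσ j hj), if_neg hσqj]
          omega
      · right
        refine ⟨fun i hi => ?_, by omega⟩
        rw [← hy i (by omega), ← he i hi]

lemma core_le {n j a K : ℕ} (hj : j < n) (haK : a + 1 < K)
    {x x' y y' : List ℕ}
    (hxl : x.length = n) (hx'l : x'.length = n) (hyl : y.length = n) (hy'l : y'.length = n)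
    {σ : ℕ → ℕ} (hσ : ∀ i < n, σ i < n)
    (hσinj : ∀ i₁, i₁ < n → ∀ i₂, i₂ < n → σ i₁ = σ i₂ → i₁ = i₂)
    (hxj : x.getD j 0 = a)
    (hxtop : ∀ i, j < i → i < n → x.getD i 0 = K)
    (hxle : ∀ i < n, x.getD i 0 ≤ K)
    (hx' : ∀ i < n, x'.getD i 0 = if i = j then a + 1 else x.getD i 0)
    (hy : ∀ i < n, y.getD i 0 = x.getD (σ i) 0)
    (hy' : ∀ i < n, y'.getD i 0 = x'.getD (σ i) 0)
    (hper : (∀ i < n, x.getD (σ i) 0 = x.getD i 0) → ∃ p, p ≤ j ∧ σ p = j)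
    (hxy : x ≤ y) :
    x' ≤ y' ∨ ((∀ i < j, x.getD (σ i) 0 = x.getD i 0) ∧ x.getD (σ j) 0 = a + 1) := by
  rcases lt_or_eq_of_le hxy with hlt | heq
  · rcases core_lt hj haK hxl hx'l hyl hy'l hσ hxj hxtop hxle hx' hy hy' hlt with h | h
    · exact Or.inl (le_of_lt h)
    · exact Or.inr h
  · left
    have hall : ∀ i < n, x.getD (σ i) 0 = x.getD i 0 := by
      intro i hi
      rw [← hy i hi, ← heq]
    obtain ⟨p, hpj, hpσ⟩ := hper hall
    have hpn : p < n := by omega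
    rcases lt_or_eq_of_le hpj with hplt | hpeq
    · refine le_of_lt (lex_lt_intro x' y' p (by omega) (by omega) (fun i hi => ?_) ?_)
      · have hin : i < n := by omega
        have hσi : σ i ≠ j := by
          intro hc
          have := hσinj i hin p hpn (hc.trans hpσ.symm)
          omega
        rw [hx' i hin, if_neg (by omega), hy' i hin, hx' (σ i) (hσ i hin), if_neg hσi,
          hall i hin]
      · have hxp : x.getD p 0 = a := by
          have := hall p hpn
          rw [hpσ] at this
          omega
        rw [hx' p hpn, if_neg (by omega), hy' p hpn, hpσ, hx' j hj, if_pos rfl]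
        omega
    · rw [hpeq] at hpσ hpn
      refine le_of_eq (getD_ext x' y' (by omega) (fun i hi => ?_))
      rw [hx'l] at hi
      by_cases hij : i = j
      · rw [hij, hy' j hj, hpσ, hx' j hj]
      · have hσi : σ i ≠ j := by
          intro hc
          exact hij (hσinj i hi j hj (hc.trans hpσ.symm))
        rw [hx' i hi, if_neg hij, hy' i hi, hx' (σ i) (hσ i hi), if_neg hσi, hall i hi]

lemma rot_mod_lt {n : ℕ} (hn : 0 < n) (s : ℕ) : ∀ i < n, (i + s) % n < n :=
  fun _ _ => Nat.mod_lt _ hn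

lemma rot_inj {n : ℕ} (s : ℕ) :
    ∀ i₁, i₁ < n → ∀ i₂, i₂ < n → (i₁ + s) % n = (i₂ + s) % n → i₁ = i₂ := by
  intro i₁ h₁ i₂ h₂ h
  have : i₁ % n = i₂ % n := Nat.ModEq.add_right_cancel' s h
  rwa [Nat.mod_eq_of_lt h₁, Nat.mod_eq_of_lt h₂] at this

lemma badA {n j a K s : ℕ} {x : List ℕ} (hj : j < n) (haK : a + 1 < K)
    (hxj : x.getD j 0 = a)
    (hxtop : ∀ i, j < i → i < n → x.getD i 0 = K)
    (hall : ∀ i < j, x.getD ((i + s) % n) 0 = x.getD i 0)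
    (hsj : x.getD ((j + s) % n) 0 = a + 1) : False := by
  have hn : 0 < n := by omega
  have key : ∀ c, x.getD ((j + (c + 1) * s) % n) 0 = a + 1 := by
    intro c
    induction c with
    | zero => simpa using hsj
    | succ c ih =>
      set i := (j + (c + 1) * s) % n with hidef
      have hin : i < n := Nat.mod_lt _ hn
      have hij : i ≠ j := by
        intro hc
        rw [hc, hxj] at ih
        omega
      have hile : i < j := by
        rcases Nat.lt_or_ge i j with h | h
        · exact h
        · have : j < i := by omega
          rw [hxtop i this hin] at ih
          omega
      have h1 := hall i hile
      rw [ih] at h1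
      have h2 : (i + s) % n = (j + (c + 1 + 1) * s) % n := by
        rw [hidef, Nat.mod_add_mod]
        congr 1
        ring
      rw [h2] at h1
      exact h1
  have := key (n - 1)
  have hne : ((n - 1) + 1) * s = n * s := by
    congr 1
    omega
  rw [hne, Nat.add_mul_mod_self_left, Nat.mod_eq_of_lt hj, hxj] at this
  omega

lemma perA {n j a K s : ℕ} {x : List ℕ} (hj : j < n) (haK : a + 1 < K)
    (hxj : x.getD j 0 = a)
    (hxtop : ∀ i, j < i → i < n → x.getD i 0 = K)
    (hall : ∀ i < n, x.getD ((i + s) % n) 0 = x.getD i 0) :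
    ∃ p, p ≤ j ∧ (p + s) % n = j := by
  have hn : 0 < n := by omega
  have key : ∀ c, x.getD ((j + c * s) % n) 0 = a := by
    intro c
    induction c with
    | zero => simpa [Nat.mod_eq_of_lt hj] using hxj
    | succ c ih =>
      set i := (j + c * s) % n with hidef
      have hin : i < n := Nat.mod_lt _ hn
      have h1 := hall i hin
      rw [ih] at h1
      have h2 : (i + s) % n = (j + (c + 1) * s) % n := by
        rw [hidef, Nat.mod_add_mod]
        congr 1
        ring
      rw [h2] at h1
      exact h1
  refine ⟨(j + (n - 1) * s) % n, ?_, ?_⟩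
  · have h1 := key (n - 1)
    have h2 : (j + (n - 1) * s) % n < n := Nat.mod_lt _ hn
    by_contra hc
    push_neg at hc
    rw [hxtop _ hc h2] at h1
    omega
  · rw [Nat.mod_add_mod]
    have : j + (n - 1) * s + s = j + n * s := by
      have : (n - 1) * s + s = n * s := by
        have : (n - 1 + 1) * s = n * s := by congr 1; omega
        rw [← this]
        ring
      omega
    rw [this, Nat.add_mul_mod_self_left, Nat.mod_eq_of_lt hj]

lemma refl_lt {n e : ℕ} (hn : 0 < n) : ∀ i < n, (e + n - i) % n < n :=
  fun _ _ => Nat.mod_lt _ hn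

lemma refl_invol {n e : ℕ} (he : e < n) {i : ℕ} (hi : i < n) :
    (e + n - ((e + n - i) % n)) % n = i := by
  rcases le_or_gt i e with h | h
  · have h1 : e + n - i = (e - i) + n := by omega
    have h2 : (e + n - i) % n = e - i := by
      rw [h1, Nat.add_mod_right, Nat.mod_eq_of_lt (by omega)]
    rw [h2]
    have h3 : e + n - (e - i) = i + n := by omega
    rw [h3, Nat.add_mod_right, Nat.mod_eq_of_lt hi]
  · have h2 : (e + n - i) % n = e + n - i := Nat.mod_eq_of_lt (by omega)
    rw [h2]
    have h3 : e + n - (e + n - i) = i := by omega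
    rw [h3, Nat.mod_eq_of_lt hi]

lemma refl_inj {n e : ℕ} (he : e < n) :
    ∀ i₁, i₁ < n → ∀ i₂, i₂ < n → (e + n - i₁) % n = (e + n - i₂) % n → i₁ = i₂ := by
  intro i₁ h₁ i₂ h₂ h
  have := refl_invol he h₁
  rw [h, refl_invol he h₂] at this
  omega

lemma badB {n j a K e : ℕ} {x : List ℕ} (hj : j < n) (he : e < n) (haK : a + 1 < K)
    (hxj : x.getD j 0 = a)
    (hxtop : ∀ i, j < i → i < n → x.getD i 0 = K)
    (hall : ∀ i < j, x.getD ((e + n - i) % n) 0 = x.getD i 0)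
    (hsj : x.getD ((e + n - j) % n) 0 = a + 1) : False := by
  have hn : 0 < n := by omega
  set t := (e + n - j) % n with htdef
  have htn : t < n := Nat.mod_lt _ hn
  have htj : t ≠ j := by
    intro hc
    rw [hc, hxj] at hsj
    omega
  have htlt : t < j := by
    rcases Nat.lt_or_ge t j with h | h
    · exact h
    · have : j < t := by omega
      rw [hxtop t this htn] at hsj
      omega
  have h1 := hall t htlt
  rw [hsj] at h1
  rw [htdef, refl_invol he hj, hxj] at h1
  omega


lemma refl_index {n s i : ℕ} (hn : 0 < n) (hi : i < n) :
    n - 1 - ((i + s) % n) = ((n - 1 - s % n) + n - i) % n := by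
  set s' := s % n with hs'def
  have hs' : s' < n := Nat.mod_lt _ hn
  have h0 : (i + s) % n = (i + s') % n := by
    rw [Nat.add_mod i s n, Nat.mod_eq_of_lt hi, ← hs'def]
  rw [h0]
  rcases Nat.lt_or_ge (i + s') n with h | h
  · rw [Nat.mod_eq_of_lt h]
    have h1 : (n - 1 - s') + n - i = (n - 1 - s' - i) + n := by omega
    rw [h1, Nat.add_mod_right, Nat.mod_eq_of_lt (by omega)]
    omega
  · rw [Nat.mod_eq_sub_mod h, Nat.mod_eq_of_lt (by omega)]
    rw [Nat.mod_eq_of_lt (by omega : (n - 1 - s') + n - i < n)]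
    omega

lemma getD_rotate (l : List ℕ) (s i : ℕ) (hi : i < l.length) :
    (l.rotate s).getD i 0 = l.getD ((i + s) % l.length) 0 := by
  rw [List.getD_eq_getElem _ _ (by rw [List.length_rotate]; exact hi),
      List.getD_eq_getElem _ _ (Nat.mod_lt _ (by omega)),
      List.getElem_rotate]

lemma getD_reverse (l : List ℕ) (i : ℕ) (hi : i < l.length) :
    l.reverse.getD i 0 = l.getD (l.length - 1 - i) 0 := by
  rw [List.getD_eq_getElem _ _ (by simpa using hi),
      List.getD_eq_getElem _ _ (by omega), List.getElem_reverse]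

lemma rotate_inv (L : List ℕ) (s : ℕ) (hL : 0 < L.length) :
    (L.rotate s).rotate (L.length - s % L.length) = L := by
  rw [List.rotate_rotate, ← List.rotate_mod]
  have h2 : s % L.length ≤ s := Nat.mod_le _ _
  have h3 : s % L.length < L.length := Nat.mod_lt _ hL
  have h4 : s + (L.length - s % L.length) = (s - s % L.length) + L.length := by omega
  have h5 : s - s % L.length = L.length * (s / L.length) := by
    have := Nat.mod_add_div s L.length
    omega
  rw [h4, Nat.add_mod_right, h5, Nat.mul_mod_right, List.rotate_zero]

lemma word_len (β : List ℕ) (c K m : ℕ) :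
    (β ++ c :: List.replicate m K).length = β.length + 1 + m := by
  simp
  omega

lemma word_getD_lt (β : List ℕ) (c K m : ℕ) {i : ℕ} (h : i < β.length) :
    (β ++ c :: List.replicate m K).getD i 0 = β.getD i 0 :=
  List.getD_append _ _ _ _ h

lemma word_getD_eq (β : List ℕ) (c K m : ℕ) :
    (β ++ c :: List.replicate m K).getD β.length 0 = c := by
  rw [List.getD_append_right _ _ _ _ le_rfl]
  simp

lemma word_getD_gt (β : List ℕ) (c K m : ℕ) {i : ℕ} (h1 : β.length < i)
    (h2 : i < β.length + 1 + m) :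
    (β ++ c :: List.replicate m K).getD i 0 = K := by
  rw [List.getD_append_right _ _ _ _ (by omega)]
  have h3 : i - β.length = (i - β.length - 1) + 1 := by omega
  rw [h3, List.getD_cons_succ]
  rw [List.getD_eq_getElem _ _ (by simp; omega), List.getElem_replicate]



/-- Case (ii): if the last non-(k-1) symbol of an asymmetric bracelet is
`< k-2`, incrementing it yields an asymmetric bracelet. -/
theorem lastNonMax_case_small (k : ℕ) (β : List ℕ) (a m : ℕ)
    (hmem : ∀ x ∈ β ++ a :: List.replicate m (k - 1), x < k)
    (ha : a < k - 2)
    (hb : IsAsymBracelet (β ++ a :: List.replicate m (k - 1))) :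
    IsAsymBracelet (β ++ (a + 1) :: List.replicate m (k - 1)) := by
  set α := β ++ a :: List.replicate m (k - 1) with hαdef
  set α' := β ++ (a + 1) :: List.replicate m (k - 1) with hα'def
  set j := β.length with hjdef
  set n := j + 1 + m with hndef
  have haK : a + 1 < k - 1 := by omega
  have hj : j < n := by omega
  have hn : 0 < n := by omega
  have hαl : α.length = n := by rw [hαdef, word_len]
  have hα'l : α'.length = n := by rw [hα'def, word_len]
  have hxj : α.getD j 0 = a := word_getD_eq β a (k - 1) m
  have hx'j : α'.getD j 0 = a + 1 := word_getD_eq β (a + 1) (k - 1) m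
  have hxtop : ∀ i, j < i → i < n → α.getD i 0 = k - 1 := fun i h1 h2 =>
    word_getD_gt β a (k - 1) m h1 (by omega)
  have hxle : ∀ i < n, α.getD i 0 ≤ k - 1 := by
    intro i hi
    have hi' : i < α.length := by omega
    have hm : α.getD i 0 ∈ α := by
      rw [List.getD_eq_getElem _ _ hi']
      exact List.getElem_mem hi'
    have := hmem _ hm
    omega
  have hx' : ∀ i < n, α'.getD i 0 = if i = j then a + 1 else α.getD i 0 := by
    intro i hi
    rcases lt_trichotomy i j with h | h | h
    · rw [if_neg (by omega), hα'def, hαdef, word_getD_lt β _ _ _ h, word_getD_lt β _ _ _ h]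
    · rw [h, if_pos rfl, hx'j]
    · rw [if_neg (by omega), hα'def, hαdef, word_getD_gt β _ _ _ h (by omega),
        word_getD_gt β _ _ _ h (by omega)]
  -- Part A : α' is a necklace
  have necA : ∀ s, α' ≤ α'.rotate s := by
    intro s
    have hy : ∀ i < n, (α.rotate s).getD i 0 = α.getD ((i + s) % n) 0 := by
      intro i hi
      rw [getD_rotate α s i (by omega), hαl]
    have hy' : ∀ i < n, (α'.rotate s).getD i 0 = α'.getD ((i + s) % n) 0 := by
      intro i hi
      rw [getD_rotate α' s i (by omega), hα'l]
    rcases core_le (σ := fun i => (i + s) % n) (y := α.rotate s) (y' := α'.rotate s)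
      hj haK hαl hα'l
      (by rw [List.length_rotate, hαl]) (by rw [List.length_rotate, hα'l])
      (rot_mod_lt hn s) (rot_inj s) hxj hxtop hxle hx' hy hy'
      (fun hall => perA hj haK hxj hxtop hall) (hb.1.1 s) with h | h
    · exact h
    · exact absurd h.2 (fun hc => badA hj haK hxj hxtop h.1 hc)
  -- Part B : α' strictly below all rotations of its reversal
  have hstrict : ∀ s, α' < α'.reverse.rotate s := by
    intro s
    set e := n - 1 - s % n with hedef
    have he : e < n := by omega
    have hσ : ∀ i < n, (e + n - i) % n < n := refl_lt hn
    have hrevlen : α.reverse.length = n := by rw [List.length_reverse, hαl]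
    have hrevlen' : α'.reverse.length = n := by rw [List.length_reverse, hα'l]
    have hy : ∀ i < n, (α.reverse.rotate s).getD i 0 = α.getD ((e + n - i) % n) 0 := by
      intro i hi
      rw [getD_rotate α.reverse s i (by omega), hrevlen,
        getD_reverse α _ (by rw [hαl]; exact Nat.mod_lt _ hn), hαl,
        refl_index hn hi, hedef]
    have hy' : ∀ i < n, (α'.reverse.rotate s).getD i 0 = α'.getD ((e + n - i) % n) 0 := by
      intro i hi
      rw [getD_rotate α'.reverse s i (by omega), hrevlen',
        getD_reverse α' _ (by rw [hα'l]; exact Nat.mod_lt _ hn), hα'l,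
        refl_index hn hi, hedef]
    have hxy : α < α.reverse.rotate s := by
      refine lt_of_le_of_ne (hb.1.2 s) (fun hc => hb.2 ?_)
      refine ⟨α.reverse.length - s % α.reverse.length, ?_⟩
      have h1 := rotate_inv α.reverse s (by rw [hrevlen]; omega)
      rw [← hc] at h1
      exact h1.symm
    rcases core_lt (σ := fun i => (e + n - i) % n) (y := α.reverse.rotate s)
      (y' := α'.reverse.rotate s) hj haK hαl hα'l
      (by rw [List.length_rotate, hrevlen]) (by rw [List.length_rotate, hrevlen'])
      hσ hxj hxtop hxle hx' hy hy' hxy with h | h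
    · exact h
    · exact absurd h.2 (fun hc => badB hj he haK hxj hxtop h.1 hc)
  refine ⟨⟨necA, fun s => le_of_lt (hstrict s)⟩, ?_⟩
  rintro ⟨c, hc⟩
  have h1 := hstrict (α'.length - c % α'.length)
  rw [hc, rotate_inv α' c (by rw [hα'l]; omega)] at h1
  exact absurd h1 (lt_irrefl _)
end

section
/- For n ≥ 12 and k = 3, the word α = 0 0 1 0 2^{n−10} 0 1 0 0 1 2 (i.e., 0010 followed by n−10 copies of 2, followed by 010012) is an asymmetric bracelet, yet none of the following four words is an asymmetric bracelet: (i) the rotation-adjusted word obtained by decrementing the first symbol modulo 3, namely 00122 0 1 0 2^{n−10} 0 1; (ii) the word obtained by incrementing the last symbol modulo 3 and rotating, namely 0 0 0 1 0 2^{n−10} 0 1 0 0 1; (iii) the word obtained by decrementing the first nonzero symbol, namely 0 0 0 0 0 2^{n−10} 0 1 0 0 1 2; (iv) the word obtained by incrementing the last non-2 symbol, namely 0 0 1 0 2^{n−10} 0 1 0 0 2 2. -/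
open List

lemma rel1 {a b : ℕ} {s t : List ℕ} (h : a < b) : a :: s < b :: t := List.Lex.rel h

lemma rel2 {a : ℕ} {s t : List ℕ} (h : s < t) : a :: s < a :: t := List.Lex.cons h

lemma rel3 {k x : ℕ} {s t : List ℕ} (h : s < t) :
    List.replicate k x ++ s < List.replicate k x ++ t := by
  induction k with
  | zero => simpa using h
  | succ k ih => rw [replicate_succ, cons_append, cons_append]; exact rel2 ih

lemma rot_eq (u v : List ℕ) {l : List ℕ} {j : ℕ} (h : l = u ++ v) (hlen : u.length = j) :
    l.rotate j = v ++ u := by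
  subst hlen; rw [h]; exact rotate_append_length_eq u v

lemma repl_split (m t x : ℕ) (h : t ≤ m) :
    List.replicate m x = List.replicate t x ++ List.replicate (m - t) x := by
  rw [← List.replicate_add]; congr 1; omega

lemma alpha_lt_rot (m : ℕ) (hm : 2 ≤ m) (j : ℕ) (hj : j < m + 10) (hj0 : j ≠ 0) :
    ([0,0,1,0] ++ List.replicate m 2 ++ [0,1,0,0,1,2] : List ℕ) <
      ([0,0,1,0] ++ List.replicate m 2 ++ [0,1,0,0,1,2]).rotate j := by
  rcases Nat.lt_or_ge j 4 with h4 | h4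
  · interval_cases j
    · omega
    · rw [rot_eq [0] ([0,1,0] ++ List.replicate m 2 ++ [0,1,0,0,1,2]) (by simp) (by simp)]
      simp only [cons_append, nil_append, append_assoc]
      exact rel2 (rel1 one_pos)
    · rw [rot_eq [0,0] ([1,0] ++ List.replicate m 2 ++ [0,1,0,0,1,2]) (by simp) (by simp)]
      simp only [cons_append, nil_append, append_assoc]
      exact rel1 one_pos
    · rw [rot_eq [0,0,1] ([0] ++ List.replicate m 2 ++ [0,1,0,0,1,2]) (by simp) (by simp)]
      obtain ⟨p, rfl⟩ : ∃ p, m = p + 2 := ⟨m - 2, by omega⟩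
      simp only [cons_append, nil_append, append_assoc, replicate_succ]
      exact rel2 (rel1 (by norm_num))
  · obtain ⟨t, rfl⟩ : ∃ t, j = 4 + t := ⟨j - 4, by omega⟩
    rcases Nat.lt_or_ge t m with ht | ht
    · rw [rot_eq ([0,0,1,0] ++ List.replicate t 2)
          (List.replicate (m - t) 2 ++ [0,1,0,0,1,2])
          (by rw [repl_split m t 2 ht.le]; simp only [append_assoc])
          (by simp only [length_append, length_replicate, length_cons, length_nil] <;> omega)]
      obtain ⟨p, hp⟩ : ∃ p, m - t = p + 1 := ⟨m - t - 1, by omega⟩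
      rw [hp, replicate_succ]
      simp only [cons_append, nil_append, append_assoc]
      exact rel1 (by norm_num)
    · obtain ⟨s, rfl⟩ : ∃ s, t = m + s := ⟨t - m, by omega⟩
      have hs : s < 6 := by omega
      interval_cases s
      · rw [rot_eq ([0,0,1,0] ++ List.replicate m 2) [0,1,0,0,1,2]
            (by simp [append_assoc])
            (by simp only [length_append, length_replicate, length_cons, length_nil] <;> omega)]
        simp only [cons_append, nil_append, append_assoc]
        exact rel2 (rel1 one_pos)
      · rw [rot_eq ([0,0,1,0] ++ List.replicate m 2 ++ [0]) [1,0,0,1,2]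
            (by simp [append_assoc])
            (by simp only [length_append, length_replicate, length_cons, length_nil] <;> omega)]
        simp only [cons_append, nil_append, append_assoc]
        exact rel1 one_pos
      · rw [rot_eq ([0,0,1,0] ++ List.replicate m 2 ++ [0,1]) [0,0,1,2]
            (by simp [append_assoc])
            (by simp only [length_append, length_replicate, length_cons, length_nil] <;> omega)]
        simp only [cons_append, nil_append, append_assoc]
        exact rel2 (rel2 (rel2 (rel1 (by norm_num))))
      · rw [rot_eq ([0,0,1,0] ++ List.replicate m 2 ++ [0,1,0]) [0,1,2]
            (by simp [append_assoc])
            (by simp only [length_append, length_replicate, length_cons, length_nil] <;> omega)]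
        simp only [cons_append, nil_append, append_assoc]
        exact rel2 (rel1 one_pos)
      · rw [rot_eq ([0,0,1,0] ++ List.replicate m 2 ++ [0,1,0,0]) [1,2]
            (by simp [append_assoc])
            (by simp only [length_append, length_replicate, length_cons, length_nil] <;> omega)]
        simp only [cons_append, nil_append, append_assoc]
        exact rel1 one_pos
      · rw [rot_eq ([0,0,1,0] ++ List.replicate m 2 ++ [0,1,0,0,1]) [2]
            (by simp [append_assoc])
            (by simp only [length_append, length_replicate, length_cons, length_nil] <;> omega)]
        simp only [cons_append, nil_append, append_assoc]
        exact rel1 (by norm_num)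

lemma alpha_lt_revrot (m : ℕ) (hm : 2 ≤ m) (j : ℕ) (hj : j < m + 10) :
    ([0,0,1,0] ++ List.replicate m 2 ++ [0,1,0,0,1,2] : List ℕ) <
      ([2,1,0,0,1,0] ++ List.replicate m 2 ++ [0,1,0,0]).rotate j := by
  rcases Nat.lt_or_ge j 6 with h6 | h6
  · interval_cases j
    · rw [rotate_zero]
      simp only [cons_append, nil_append, append_assoc]
      exact rel1 (by norm_num)
    · rw [rot_eq [2] ([1,0,0,1,0] ++ List.replicate m 2 ++ [0,1,0,0]) (by simp) (by simp)]
      simp only [cons_append, nil_append, append_assoc]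
      exact rel1 one_pos
    · rw [rot_eq [2,1] ([0,0,1,0] ++ List.replicate m 2 ++ [0,1,0,0]) (by simp) (by simp)]
      simp only [cons_append, nil_append, append_assoc]
      exact rel2 (rel2 (rel2 (rel2 (rel3 (rel2 (rel2 (rel2 (rel2 (rel1 one_lt_two)))))))))
    · rw [rot_eq [2,1,0] ([0,1,0] ++ List.replicate m 2 ++ [0,1,0,0]) (by simp) (by simp)]
      simp only [cons_append, nil_append, append_assoc]
      exact rel2 (rel1 one_pos)
    · rw [rot_eq [2,1,0,0] ([1,0] ++ List.replicate m 2 ++ [0,1,0,0]) (by simp) (by simp)]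
      simp only [cons_append, nil_append, append_assoc]
      exact rel1 one_pos
    · rw [rot_eq [2,1,0,0,1] ([0] ++ List.replicate m 2 ++ [0,1,0,0]) (by simp) (by simp)]
      obtain ⟨p, rfl⟩ : ∃ p, m = p + 2 := ⟨m - 2, by omega⟩
      simp only [cons_append, nil_append, append_assoc, replicate_succ]
      exact rel2 (rel1 (by norm_num))
  · rcases Nat.lt_or_ge j (m + 6) with hlt | hge
    · obtain ⟨t, rfl⟩ : ∃ t, j = 6 + t := ⟨j - 6, by omega⟩
      have ht : t < m := by omega
      rw [rot_eq ([2,1,0,0,1,0] ++ List.replicate t 2)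
          (List.replicate (m - t) 2 ++ [0,1,0,0])
          (by rw [repl_split m t 2 ht.le]; simp only [append_assoc])
          (by simp only [length_append, length_replicate, length_cons, length_nil] <;> omega)]
      obtain ⟨p, hp⟩ : ∃ p, m - t = p + 1 := ⟨m - t - 1, by omega⟩
      rw [hp, replicate_succ]
      simp only [cons_append, nil_append, append_assoc]
      exact rel1 (by norm_num)
    · obtain ⟨s, rfl⟩ : ∃ s, j = m + 6 + s := ⟨j - (m + 6), by omega⟩
      have hs : s < 4 := by omega
      interval_cases s
      · rw [rot_eq ([2,1,0,0,1,0] ++ List.replicate m 2) [0,1,0,0]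
            (by simp [append_assoc])
            (by simp only [length_append, length_replicate, length_cons, length_nil] <;> omega)]
        simp only [cons_append, nil_append, append_assoc]
        exact rel2 (rel1 one_pos)
      · rw [rot_eq ([2,1,0,0,1,0] ++ List.replicate m 2 ++ [0]) [1,0,0]
            (by simp [append_assoc])
            (by simp only [length_append, length_replicate, length_cons, length_nil] <;> omega)]
        simp only [cons_append, nil_append, append_assoc]
        exact rel1 one_pos
      · rw [rot_eq ([2,1,0,0,1,0] ++ List.replicate m 2 ++ [0,1]) [0,0]
            (by simp [append_assoc])
            (by simp only [length_append, length_replicate, length_cons, length_nil] <;> omega)]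
        simp only [cons_append, nil_append, append_assoc]
        exact rel2 (rel2 (rel1 one_lt_two))
      · rw [rot_eq ([2,1,0,0,1,0] ++ List.replicate m 2 ++ [0,1,0]) [0]
            (by simp [append_assoc])
            (by simp only [length_append, length_replicate, length_cons, length_nil] <;> omega)]
        simp only [cons_append, nil_append, append_assoc]
        exact rel2 (rel1 (by norm_num))

/-- For `n ≥ 12` and `k = 3`, the word `α = 0010·2^(n-10)·010012` is an
asymmetric bracelet, but none of the four words obtained by decrementing the
first symbol (mod 3, rotated), incrementing the last symbol (mod 3, rotated),
decrementing the first nonzero symbol, or incrementing the last non-2 symbol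
is an asymmetric bracelet. -/
theorem counterexample_ternary (n : ℕ) (hn : 12 ≤ n) :
    IsAsymBracelet ([0, 0, 1, 0] ++ List.replicate (n - 10) 2 ++ [0, 1, 0, 0, 1, 2]) ∧
    ¬ IsAsymBracelet ([0, 0, 1, 2, 2, 0, 1, 0] ++ List.replicate (n - 10) 2 ++ [0, 1]) ∧
    ¬ IsAsymBracelet ([0, 0, 0, 1, 0] ++ List.replicate (n - 10) 2 ++ [0, 1, 0, 0, 1]) ∧
    ¬ IsAsymBracelet ([0, 0, 0, 0] ++ List.replicate (n - 10) 2 ++ [0, 1, 0, 0, 1, 2]) ∧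
    ¬ IsAsymBracelet ([0, 0, 1, 0] ++ List.replicate (n - 10) 2 ++ [0, 1, 0, 0, 2, 2]) := by
  set m := n - 10 with hmdef
  have hm : 2 ≤ m := by omega
  set A : List ℕ := [0, 0, 1, 0] ++ List.replicate m 2 ++ [0, 1, 0, 0, 1, 2] with hAdef
  have hlenA : A.length = m + 10 := by
    rw [hAdef]
    simp only [length_append, length_replicate, length_cons, length_nil] <;> omega
  have hrevA : A.reverse = [2,1,0,0,1,0] ++ List.replicate m 2 ++ [0,1,0,0] := by
    rw [hAdef]; simp
  have hlenR : A.reverse.length = m + 10 := by rw [length_reverse, hlenA]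
  refine ⟨⟨⟨?_, ?_⟩, ?_⟩, ?_, ?_, ?_, ?_⟩
  · -- necklace
    intro i
    have h0 : A.rotate (i % (m + 10)) = A.rotate i := by rw [← hlenA, List.rotate_mod]
    rw [← h0]
    by_cases h : i % (m + 10) = 0
    · rw [h, rotate_zero]
    · exact le_of_lt (alpha_lt_rot m hm _ (Nat.mod_lt _ (by omega)) h)
  · -- reverse rotations
    intro i
    have h0 : A.reverse.rotate (i % (m + 10)) = A.reverse.rotate i := by
      rw [← hlenR, List.rotate_mod]
    rw [← h0, hrevA]
    exact le_of_lt (alpha_lt_revrot m hm _ (Nat.mod_lt _ (by omega)))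
  · -- asymmetric
    rintro ⟨i, hi⟩
    have h1 : A.reverse = A.rotate (i % (m + 10)) := by
      rw [hi, ← hlenA, List.rotate_mod]
    have h2 : A.reverse.rotate (m + 10 - i % (m + 10)) = A := by
      rw [h1, List.rotate_rotate]
      have hjlt : i % (m + 10) < m + 10 := Nat.mod_lt _ (by omega)
      have : i % (m + 10) + (m + 10 - i % (m + 10)) = m + 10 := by omega
      rw [this, ← hlenA, List.rotate_length]
    have h3 : A.reverse.rotate ((m + 10 - i % (m + 10)) % (m + 10)) = A := by
      have hmod := List.rotate_mod A.reverse (m + 10 - i % (m + 10))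
      rw [hlenR] at hmod
      rw [hmod, h2]
    have h4 := alpha_lt_revrot m hm ((m + 10 - i % (m + 10)) % (m + 10))
      (Nat.mod_lt _ (by omega))
    rw [← hrevA, h3] at h4
    exact lt_irrefl _ h4
  · -- (i)
    rintro ⟨⟨-, hb⟩, -⟩
    have hrev : ([0,0,1,2,2,0,1,0] ++ List.replicate m 2 ++ [0,1] : List ℕ).reverse
        = [1,0] ++ List.replicate m 2 ++ [0,1,0,2,2,1,0,0] := by simp
    have hrot := hb (m + 8)
    rw [hrev, rot_eq ([1,0] ++ List.replicate m 2 ++ [0,1,0,2,2,1]) [0,0]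
        (by simp [append_assoc])
        (by simp only [length_append, length_replicate, length_cons, length_nil] <;> omega)]
      at hrot
    refine absurd hrot (not_le.mpr ?_)
    simp only [cons_append, nil_append, append_assoc]
    exact rel2 (rel2 (rel2 (rel1 (by norm_num))))
  · -- (ii)
    rintro ⟨⟨-, hb⟩, -⟩
    have hrev : ([0,0,0,1,0] ++ List.replicate m 2 ++ [0,1,0,0,1] : List ℕ).reverse
        = [1,0,0,1,0] ++ List.replicate m 2 ++ [0,1,0,0,0] := by simp
    have hrot := hb (m + 7)
    rw [hrev, rot_eq ([1,0,0,1,0] ++ List.replicate m 2 ++ [0,1]) [0,0,0]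
        (by simp [append_assoc])
        (by simp only [length_append, length_replicate, length_cons, length_nil] <;> omega)]
      at hrot
    refine absurd hrot (not_le.mpr ?_)
    obtain ⟨p, hp⟩ : ∃ p, m = p + 2 := ⟨m - 2, by omega⟩
    rw [hp, show List.replicate (p + 2) (2:ℕ) = 2 :: 2 :: List.replicate p 2 from rfl]
    simp only [cons_append, nil_append, append_assoc]
    exact rel2 (rel2 (rel2 (rel2 (rel2 (rel1 (by norm_num))))))
  · -- (iii)
    rintro ⟨⟨-, hb⟩, -⟩
    have hrev : ([0,0,0,0] ++ List.replicate m 2 ++ [0,1,0,0,1,2] : List ℕ).reverse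
        = [2,1,0,0,1,0] ++ List.replicate m 2 ++ [0,0,0,0] := by simp
    have hrot := hb (m + 6)
    rw [hrev, rot_eq ([2,1,0,0,1,0] ++ List.replicate m 2) [0,0,0,0]
        (by simp [append_assoc])
        (by simp only [length_append, length_replicate, length_cons, length_nil] <;> omega)]
      at hrot
    refine absurd hrot (not_le.mpr ?_)
    obtain ⟨p, hp⟩ : ∃ p, m = p + 2 := ⟨m - 2, by omega⟩
    rw [hp, show List.replicate (p + 2) (2:ℕ) = 2 :: 2 :: List.replicate p 2 from rfl]
    simp only [cons_append, nil_append, append_assoc]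
    exact rel2 (rel2 (rel2 (rel2 (rel2 (rel1 one_lt_two)))))
  · -- (iv) symmetric
    rintro ⟨-, hsym⟩
    refine hsym ⟨m + 8, ?_⟩
    rw [rot_eq ([0,0,1,0] ++ List.replicate m 2 ++ [0,1,0,0]) [2,2]
        (by simp [append_assoc])
        (by simp only [length_append, length_replicate, length_cons, length_nil] <;> omega)]
    simp
end

section
/- For k ≥ 3, the maximum length of a k-ary orientable sequence of order 2 equals k·⌊(k−1)/2⌋. -/
/-- The cyclic window of length `n` starting at position `i` of `s`. -/
def cycWindow (s : List ℕ) (n i : ℕ) : List ℕ := (s.rotate i).take n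

/-- `s` is a (cyclic) orientable sequence of order `n` over `{0,…,k-1}`:
all symbols lie in the alphabet, the sequence is long enough to have
length-`n` windows, all cyclic length-`n` windows are pairwise distinct, and
no window is the reversal of a window (in particular no palindromic window). -/
def IsOrientableSeq (k n : ℕ) (s : List ℕ) : Prop :=
  (∀ x ∈ s, x < k) ∧ n ≤ s.length ∧
  (∀ i < s.length, ∀ j < s.length, i ≠ j → cycWindow s n i ≠ cycWindow s n j) ∧
  (∀ i < s.length, ∀ j < s.length, cycWindow s n i ≠ (cycWindow s n j).reverse)

namespace OSeq

/-- consecutive pairs of a list -/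
def lpairs : List ℕ → List (ℕ × ℕ)
  | a :: b :: t => (a, b) :: lpairs (b :: t)
  | _ => []

@[simp] lemma lpairs_nil : lpairs [] = [] := rfl
@[simp] lemma lpairs_single (a : ℕ) : lpairs [a] = [] := rfl
@[simp] lemma lpairs_cons₂ (a b : ℕ) (t : List ℕ) :
    lpairs (a :: b :: t) = (a, b) :: lpairs (b :: t) := rfl

lemma lpairs_cons_headI (a : ℕ) (l : List ℕ) (h : l ≠ []) :
    lpairs (a :: l) = (a, l.headI) :: lpairs l := by
  cases l with
  | nil => simp at h
  | cons b t => rfl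

/-- cyclic edges of a list -/
def cycE (s : List ℕ) : List (ℕ × ℕ) := s.zip (s.rotate 1)

lemma zip_eq_lpairs : ∀ (w : List ℕ) (y x : ℕ),
    (y :: w).zip (w ++ [x]) = lpairs (y :: w ++ [x])
  | [], y, x => rfl
  | a :: w, y, x => by
      simp only [List.cons_append, List.zip_cons_cons, lpairs_cons₂, List.cons.injEq, true_and]
      rw [← List.cons_append, zip_eq_lpairs w a x]
      try simp

lemma cycE_cons (x : ℕ) (w : List ℕ) : cycE (x :: w) = lpairs (x :: w ++ [x]) := by
  rw [cycE, show (1 : ℕ) = 0 + 1 from rfl, List.rotate_cons_succ, List.rotate_zero,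
    zip_eq_lpairs w x x]

@[simp] lemma length_cycE (s : List ℕ) : (cycE s).length = s.length := by
  simp [cycE]

lemma getElem_cycE (s : List ℕ) (i : ℕ) (hi : i < s.length) :
    (cycE s)[i]'(by simpa using hi) = (s[i], s[(i + 1) % s.length]'(Nat.mod_lt _ (by omega))) := by
  simp only [cycE, List.getElem_zip, List.getElem_rotate]

lemma mem_cycE {s : List ℕ} {p : ℕ × ℕ} (hp : p ∈ cycE s) : p.1 ∈ s ∧ p.2 ∈ s := by
  obtain ⟨p1, p2⟩ := p
  have := List.of_mem_zip hp
  exact ⟨this.1, (List.mem_rotate).1 this.2⟩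

lemma lpairs_splice : ∀ (w : List ℕ) (y x : ℕ) (v : List ℕ),
    lpairs (y :: (w ++ x :: (v ++ [x]))) = lpairs (y :: w ++ [x]) ++ lpairs (x :: v ++ [x])
  | [], y, x, v => by simp
  | a :: w, y, x, v => by
      have h := lpairs_splice w a x v
      simp only [List.cons_append, lpairs_cons₂] at h ⊢
      rw [h]

lemma cycE_splice (x : ℕ) (w v : List ℕ) :
    cycE (x :: (w ++ x :: v)) = cycE (x :: w) ++ cycE (x :: v) := by
  rw [cycE_cons, cycE_cons, cycE_cons]
  have : x :: (w ++ x :: v) ++ [x] = x :: (w ++ x :: (v ++ [x])) := by simp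
  rw [this, lpairs_splice]

/-- the `i`-th cyclic window entry pair, with defaults -/
def ed (s : List ℕ) (i : ℕ) : ℕ × ℕ := (s.getD i 0, s.getD ((i + 1) % s.length) 0)

lemma ed_eq_getElem (s : List ℕ) (i : ℕ) (hi : i < s.length) :
    ed s i = (cycE s)[i]'(by simpa using hi) := by
  rw [getElem_cycE s i hi, ed]
  congr 1 <;> rw [List.getD_eq_getElem]

lemma cycWindow_eq (s : List ℕ) (h2 : 2 ≤ s.length) (i : ℕ) (hi : i < s.length) :
    cycWindow s 2 i = [(ed s i).1, (ed s i).2] := by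
  have hlr : 2 ≤ (s.rotate i).length := by simpa using h2
  have htake : ∀ (l : List ℕ) (hl : 2 ≤ l.length), l.take 2 = [l[0]'(by omega), l[1]'(by omega)] := by
    intro l hl
    match l with
    | a :: b :: t => rfl
    | [] => simp at hl
    | [a] => simp at hl
  rw [cycWindow, htake _ hlr]
  have e0 : (0 + i) % s.length = i := by rw [Nat.zero_add, Nat.mod_eq_of_lt hi]
  have e1 : (1 + i) = (i + 1) := Nat.add_comm 1 i
  have g1 : s.getD i 0 = s[i] := List.getD_eq_getElem s 0 hi
  have g2 : s.getD ((i + 1) % s.length) 0 = s[(i + 1) % s.length]'(Nat.mod_lt _ (by omega)) :=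
    List.getD_eq_getElem s 0 (Nat.mod_lt _ (by omega))
  simp only [List.getElem_rotate, e0, e1, ed, g1, g2]

theorem isOrientable_of (k : ℕ) (s : List ℕ) (h2 : 2 ≤ s.length) (hm : ∀ x ∈ s, x < k)
    (hnd : (cycE s).Nodup) (hsw : ∀ p ∈ cycE s, ∀ q ∈ cycE s, p ≠ q.swap) :
    IsOrientableSeq k 2 s := by
  refine ⟨hm, h2, ?_, ?_⟩
  · intro i hi j hj hij hw
    rw [cycWindow_eq s h2 i hi, cycWindow_eq s h2 j hj] at hw
    simp only [List.cons.injEq, and_true] at hw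
    have hed : ed s i = ed s j := Prod.ext hw.1 hw.2
    rw [ed_eq_getElem s i hi, ed_eq_getElem s j hj] at hed
    exact hij (hnd.getElem_inj_iff.mp hed)
  · intro i hi j hj hw
    rw [cycWindow_eq s h2 i hi, cycWindow_eq s h2 j hj] at hw
    simp only [List.reverse_cons, List.reverse_nil, List.nil_append, List.cons_append,
      List.cons.injEq, and_true] at hw
    have hed : ed s i = (ed s j).swap := Prod.ext hw.1 hw.2
    have hmi : ed s i ∈ cycE s := by
      rw [ed_eq_getElem s i hi]; exact List.getElem_mem _
    have hmj : ed s j ∈ cycE s := by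
      rw [ed_eq_getElem s j hj]; exact List.getElem_mem _
    exact hsw _ hmi _ hmj hed

theorem upper (k : ℕ) (hk : 3 ≤ k) (s : List ℕ) (hs : IsOrientableSeq k 2 s) :
    s.length ≤ k * ((k - 1) / 2) := by
  obtain ⟨hmem, hL2, hdist, hrev⟩ := hs
  set L := s.length with hLdef
  have hL0 : 0 < L := by omega
  -- edge-level conditions
  have hinj : ∀ i < L, ∀ j < L, i ≠ j → ed s i ≠ ed s j := by
    intro i hi j hj hij he
    exact hdist i hi j hj hij (by rw [cycWindow_eq s hL2 i hi, cycWindow_eq s hL2 j hj, he])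
  have hsw : ∀ i < L, ∀ j < L, ed s i ≠ (ed s j).swap := by
    intro i hi j hj he
    apply hrev i hi j hj
    rw [cycWindow_eq s hL2 i hi, cycWindow_eq s hL2 j hj, he]
    rfl
  set f : ℕ → ℕ := fun i => s.getD i 0 with hfdef
  set g : ℕ → ℕ := fun i => s.getD ((i + 1) % L) 0 with hgdef
  have hedfg : ∀ i, ed s i = (f i, g i) := fun i => rfl
  have hfk : ∀ i < L, f i < k := by
    intro i hi
    apply hmem
    rw [hfdef]; simp only []
    rw [List.getD_eq_getElem s 0 hi]
    exact List.getElem_mem _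
  have hgk : ∀ i < L, g i < k := by
    intro i _
    apply hmem
    rw [hgdef]; simp only []
    rw [List.getD_eq_getElem s 0 (Nat.mod_lt _ hL0)]
    exact List.getElem_mem _
  have key : ∀ x ∈ Finset.range k,
      ((Finset.range L).filter (fun i => f i = x)).card ≤ (k - 1) / 2 := by
    intro x hx
    rw [Finset.mem_range] at hx
    set P := (Finset.range L).filter (fun i => f i = x) with hP
    set Q := (Finset.range L).filter (fun i => g i = x) with hQ
    have hmemP : ∀ a, a ∈ P ↔ (a < L ∧ f a = x) := by
      intro a; rw [hP, Finset.mem_filter, Finset.mem_range]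
    have hmemQ : ∀ a, a ∈ Q ↔ (a < L ∧ g a = x) := by
      intro a; rw [hQ, Finset.mem_filter, Finset.mem_range]
    -- |P| = |Q|
    have harith : ∀ a, a < L → ((a + (L - 1)) % L + 1) % L = a := by
      intro a ha
      rw [Nat.mod_add_mod]
      have : a + (L - 1) + 1 = a + L := by omega
      rw [this, Nat.add_mod_right, Nat.mod_eq_of_lt ha]
    have hgshift : ∀ a, g ((a + (L - 1)) % L) = f a ∨ True := fun _ => Or.inr trivial
    have hPQ : P.card = Q.card := by
      refine Finset.card_bij' (fun a _ => (a + (L - 1)) % L) (fun b _ => (b + 1) % L) ?_ ?_ ?_ ?_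
      · intro a ha
        rw [hmemP] at ha
        rw [hmemQ]
        refine ⟨Nat.mod_lt _ hL0, ?_⟩
        show s.getD ((((a + (L - 1)) % L) + 1) % L) 0 = x
        rw [harith a ha.1]
        exact ha.2
      · intro b hb
        rw [hmemQ] at hb
        rw [hmemP]
        exact ⟨Nat.mod_lt _ hL0, hb.2⟩
      · intro a ha
        rw [hmemP] at ha
        exact harith a ha.1
      · intro b hb
        rw [hmemQ] at hb
        show ((b + 1) % L + (L - 1)) % L = b
        rw [Nat.mod_add_mod]
        have : b + 1 + (L - 1) = b + L := by omega
        rw [this, Nat.add_mod_right, Nat.mod_eq_of_lt hb.1]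
    set Out := P.image g with hOutDef
    set In := Q.image f with hInDef
    have hOut : Out.card = P.card := by
      apply Finset.card_image_of_injOn
      intro a ha b hb hab
      rw [Finset.mem_coe, hmemP] at ha hb
      by_contra hne
      exact hinj a ha.1 b hb.1 hne (by rw [hedfg, hedfg, ha.2, hb.2, hab])
    have hIn : In.card = Q.card := by
      apply Finset.card_image_of_injOn
      intro a ha b hb hab
      rw [Finset.mem_coe, hmemQ] at ha hb
      by_contra hne
      exact hinj a ha.1 b hb.1 hne (by rw [hedfg, hedfg, ha.2, hb.2, hab])
    have hsub : Out ∪ In ⊆ (Finset.range k).erase x := by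
      intro y hy
      rw [Finset.mem_union] at hy
      rw [Finset.mem_erase, Finset.mem_range]
      rcases hy with hy | hy
      · obtain ⟨a, ha, hay⟩ := Finset.mem_image.mp hy
        rw [hmemP] at ha
        refine ⟨?_, hay ▸ hgk a ha.1⟩
        intro hyx
        apply hsw a ha.1 a ha.1
        have hga : g a = x := by rw [hay, hyx]
        rw [hedfg, ha.2, hga, Prod.swap_prod_mk]
      · obtain ⟨a, ha, hay⟩ := Finset.mem_image.mp hy
        rw [hmemQ] at ha
        refine ⟨?_, hay ▸ hfk a ha.1⟩
        intro hyx
        apply hsw a ha.1 a ha.1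
        have hfa : f a = x := by rw [hay, hyx]
        rw [hedfg, ha.2, hfa, Prod.swap_prod_mk]
    have hdisj : Disjoint Out In := by
      rw [Finset.disjoint_left]
      intro y hyO hyI
      obtain ⟨a, ha, hay⟩ := Finset.mem_image.mp hyO
      obtain ⟨b, hb, hby⟩ := Finset.mem_image.mp hyI
      rw [hmemP] at ha
      rw [hmemQ] at hb
      apply hsw a ha.1 b hb.1
      rw [hedfg, hedfg, ha.2, hay, hby, hb.2]
      rfl
    have hcard : Out.card + In.card ≤ k - 1 := by
      rw [← Finset.card_union_of_disjoint hdisj]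
      calc (Out ∪ In).card ≤ ((Finset.range k).erase x).card := Finset.card_le_card hsub
        _ = k - 1 := by rw [Finset.card_erase_of_mem (Finset.mem_range.mpr hx), Finset.card_range]
    omega
  calc L = (Finset.range L).card := (Finset.card_range L).symm
    _ = ∑ x ∈ Finset.range k, ((Finset.range L).filter (fun i => f i = x)).card := by
        apply Finset.card_eq_sum_card_fiberwise
        intro i hi
        rw [Finset.mem_coe, Finset.mem_range] at hi ⊢
        exact hfk i hi
    _ ≤ ∑ _x ∈ Finset.range k, (k - 1) / 2 := Finset.sum_le_sum key
    _ = k * ((k - 1) / 2) := by rw [Finset.sum_const, Finset.card_range, smul_eq_mul]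
/-! ### The construction -/

/-- the inserted cycle through the two new symbols `k`, `k+1` -/
def cycFrom (k j : ℕ) : List ℕ :=
  if j < k / 2 then 2*j :: k :: (2*j+1) :: (k+1) :: cycFrom k (j+1)
  else if k % 2 = 1 then [k-1, k, k+1] else []
termination_by k / 2 - j
decreasing_by omega

lemma cycFrom_mem (k : ℕ) : ∀ n j, k / 2 - j = n → ∀ y ∈ cycFrom k j, y < k + 2 := by
  intro n
  induction n with
  | zero =>
    intro j hj y hy
    rw [cycFrom, if_neg (by omega)] at hy
    split_ifs at hy with hp
    · simp only [List.mem_cons, List.not_mem_nil, or_false] at hy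
      omega
    · simp at hy
  | succ n ihn =>
    intro j hj y hy
    have hjlt : j < k / 2 := by omega
    rw [cycFrom, if_pos hjlt] at hy
    simp only [List.mem_cons] at hy
    rcases hy with rfl | rfl | rfl | rfl | hy
    · omega
    · omega
    · omega
    · omega
    · exact ihn (j+1) (by omega) y hy

lemma cycFrom_length (k : ℕ) : ∀ n j, k / 2 - j = n → j ≤ k / 2 →
    (cycFrom k j).length = 4 * (k / 2 - j) + (if k % 2 = 1 then 3 else 0) := by
  intro n
  induction n with
  | zero =>
    intro j hj hjle
    rw [cycFrom, if_neg (by omega)]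
    split_ifs <;> simp <;> omega
  | succ n ihn =>
    intro j hj hjle
    have hjlt : j < k / 2 := by omega
    rw [cycFrom, if_pos hjlt]
    simp only [List.length_cons, ihn (j+1) (by omega) (by omega)]
    split_ifs <;> omega

lemma cycFrom_headI (k j : ℕ) :
    (cycFrom k j ++ [0]).headI =
      if j < k / 2 then 2*j else if k % 2 = 1 then k - 1 else 0 := by
  rw [cycFrom]
  split_ifs with h1 h2 <;> simp

/-- shape of edges of the inserted cycle -/
def Q (k j a b : ℕ) : Prop :=
  (b = k ∧ a % 2 = 0 ∧ 2*j ≤ a ∧ a < k) ∨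
  (a = k ∧ b % 2 = 1 ∧ 2*j ≤ b ∧ b < k) ∨
  (b = k+1 ∧ a % 2 = 1 ∧ 2*j ≤ a ∧ a < k) ∨
  (a = k+1 ∧ b % 2 = 0 ∧ (2*j + 2 ≤ b ∨ b = 0) ∧ b < k) ∨
  (k % 2 = 1 ∧ a = k ∧ b = k+1)

lemma Q_mono (k j a b : ℕ) (h : Q k (j+1) a b) : Q k j a b := by
  unfold Q at h ⊢
  rcases h with h|h|h|h|h
  · exact Or.inl (by omega)
  · exact Or.inr (Or.inl (by omega))
  · exact Or.inr (Or.inr (Or.inl (by omega)))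
  · exact Or.inr (Or.inr (Or.inr (Or.inl (by omega))))
  · exact Or.inr (Or.inr (Or.inr (Or.inr (by omega))))

lemma Q_big (k j a b : ℕ) (h : Q k j a b) : k ≤ a ∨ k ≤ b := by
  unfold Q at h; omega

lemma Q_lt (k j a b : ℕ) (h : Q k j a b) : a < k + 2 ∧ b < k + 2 := by
  unfold Q at h; omega

lemma Q_noswap {k : ℕ} (hk : 3 ≤ k) {p q : ℕ × ℕ}
    (hp : Q k 0 p.1 p.2) (hq : Q k 0 q.1 q.2) : p ≠ q.swap := by
  obtain ⟨a, b⟩ := p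
  obtain ⟨c, d⟩ := q
  simp only [Prod.swap_prod_mk, ne_eq, Prod.mk.injEq, not_and]
  intro had hbc
  unfold Q at hp hq
  rcases hp with hp|hp|hp|hp|hp <;> rcases hq with hq|hq|hq|hq|hq <;> omega

lemma cyc_edges (k : ℕ) (hk : 3 ≤ k) : ∀ n j, j ≤ k / 2 → k / 2 - j = n →
    (∀ a b : ℕ, (a, b) ∈ lpairs (cycFrom k j ++ [0]) → Q k j a b) ∧
      (lpairs (cycFrom k j ++ [0])).Nodup := by
  intro n
  induction n with
  | zero =>
    intro j hjle hj
    rw [cycFrom, if_neg (by omega)]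
    split_ifs with hpar
    · simp only [List.cons_append, List.nil_append, lpairs_cons₂, lpairs_single]
      constructor
      · intro a b hp
        simp only [List.mem_cons, Prod.mk.injEq, List.not_mem_nil, or_false] at hp
        unfold Q
        rcases hp with ⟨rfl, rfl⟩ | ⟨rfl, rfl⟩ | ⟨rfl, rfl⟩
        · exact Or.inl (by omega)
        · exact Or.inr (Or.inr (Or.inr (Or.inr (by omega))))
        · exact Or.inr (Or.inr (Or.inr (Or.inl (by omega))))
      · rw [List.nodup_cons, List.nodup_cons, List.nodup_cons]
        refine ⟨?_, ?_, ?_, List.nodup_nil⟩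
        · intro hmem
          simp only [List.mem_cons, List.not_mem_nil, or_false, Prod.mk.injEq] at hmem
          omega
        · intro hmem
          simp only [List.mem_cons, List.not_mem_nil, or_false, Prod.mk.injEq] at hmem
          omega
        · simp
    · simp
  | succ n ihn =>
    intro j hjle hj
    have hjlt : j < k / 2 := by omega
    obtain ⟨hQr, hNr⟩ := ihn (j+1) (by omega) (by omega)
    have hne : cycFrom k (j+1) ++ [0] ≠ [] := by simp
    -- facts about the head of the continuation
    have hhead := cycFrom_headI k (j+1)
    set h := (cycFrom k (j+1) ++ [0]).headI with hhdef
    have hh2 : (h = 2*j + 2 ∧ h < k) ∨ h = 0 := by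
      rw [hhead]
      split_ifs with h1 h2
      · left; omega
      · left; omega
      · right; rfl
    have hh1 : h < k := by rcases hh2 with h' | h' <;> omega
    have hrestnil : h = 0 → lpairs (cycFrom k (j+1) ++ [0]) = [] := by
      intro h0
      rw [hhead] at h0
      split_ifs at h0 with h1 h2
      · omega
      · rw [cycFrom, if_neg h1, if_neg h2]
        simp
    rw [cycFrom, if_pos hjlt]
    simp only [List.cons_append, lpairs_cons₂]
    rw [lpairs_cons_headI _ _ hne, ← hhdef]
    constructor
    · intro a b hp
      simp only [List.mem_cons, Prod.mk.injEq] at hp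
      rcases hp with ⟨rfl, rfl⟩ | ⟨rfl, rfl⟩ | ⟨rfl, rfl⟩ | ⟨rfl, rfl⟩ | hp
      · exact Or.inl (by omega)
      · exact Or.inr (Or.inl (by omega))
      · exact Or.inr (Or.inr (Or.inl (by omega)))
      · exact Or.inr (Or.inr (Or.inr (Or.inl (by omega))))
      · exact Q_mono k j a b (hQr a b hp)
    · rw [List.nodup_cons, List.nodup_cons, List.nodup_cons, List.nodup_cons]
      refine ⟨?_, ?_, ?_, ?_, hNr⟩
      · intro hmem
        simp only [List.mem_cons, Prod.mk.injEq] at hmem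
        rcases hmem with ⟨h1, h2⟩ | ⟨h1, h2⟩ | ⟨h1, h2⟩ | hmem
        · omega
        · omega
        · omega
        · have := hQr _ _ hmem
          unfold Q at this
          omega
      · intro hmem
        simp only [List.mem_cons, Prod.mk.injEq] at hmem
        rcases hmem with ⟨h1, h2⟩ | ⟨h1, h2⟩ | hmem
        · omega
        · omega
        · have := hQr _ _ hmem
          unfold Q at this
          omega
      · intro hmem
        simp only [List.mem_cons, Prod.mk.injEq] at hmem
        rcases hmem with ⟨h1, h2⟩ | hmem
        · omega
        · have := hQr _ _ hmem
          unfold Q at this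
          omega
      · intro hmem
        rcases hh2 with ⟨h', _⟩ | h'
        · have := hQr _ _ hmem
          unfold Q at this
          omega
        · rw [hrestnil h'] at hmem
          simp at hmem
def oseq (k : ℕ) : List ℕ :=
  if k < 5 then (if k % 2 = 1 then [0,1,2] else [0,1,2,3])
  else cycFrom (k-2) 0 ++ oseq (k-2)
termination_by k
decreasing_by omega

lemma inv : ∀ k, 3 ≤ k → ∃ v, oseq k = 0 :: v ∧
    (∀ x ∈ oseq k, x < k) ∧ (cycE (oseq k)).Nodup ∧
    (∀ p ∈ cycE (oseq k), ∀ q ∈ cycE (oseq k), p ≠ q.swap) ∧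
    (oseq k).length = k * ((k - 1) / 2) := by
  intro k
  induction k using Nat.strong_induction_on with
  | _ k ih =>
  intro hk
  by_cases h5 : k < 5
  · interval_cases k
    · have h3 : oseq 3 = [0, 1, 2] := by rw [oseq]; simp
      refine ⟨[1, 2], h3, ?_, ?_, ?_, ?_⟩ <;> rw [h3] <;> decide
    · have h4 : oseq 4 = [0, 1, 2, 3] := by rw [oseq]; simp
      refine ⟨[1, 2, 3], h4, ?_, ?_, ?_, ?_⟩ <;> rw [h4] <;> decide
  · -- inductive step
    set K := k - 2 with hKdef
    have hK : 3 ≤ K := by omega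
    have hk2 : k = K + 2 := by omega
    obtain ⟨v, hv, hmem, hnd, hsw, hlen⟩ := ih K (by omega) hK
    have hosk : oseq k = cycFrom K 0 ++ oseq K := by
      rw [oseq, if_neg (by omega)]
    have h02 : 0 < K / 2 := by omega
    have hcf : cycFrom K 0 = 0 :: (K :: 1 :: (K+1) :: cycFrom K 1) := by
      rw [cycFrom, if_pos h02]
    set t := K :: 1 :: (K+1) :: cycFrom K 1 with ht
    have hosk2 : oseq k = 0 :: (t ++ 0 :: v) := by
      rw [hosk, hcf, hv]; simp
    have hsplice : cycE (oseq k) = cycE (0 :: t) ++ cycE (0 :: v) := by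
      rw [hosk2, cycE_splice]
    have hov : cycE (0 :: v) = cycE (oseq K) := by rw [hv]
    have hNE : cycE (0 :: t) = lpairs (cycFrom K 0 ++ [0]) := by
      rw [cycE_cons, hcf]
    obtain ⟨hQall, hNEnd⟩ := cyc_edges K hK (K / 2) 0 (by omega) (by omega)
    rw [← hNE] at hNEnd
    have hQall' : ∀ p ∈ cycE (0 :: t), Q K 0 p.1 p.2 := by
      intro p hp
      rw [hNE] at hp
      exact hQall p.1 p.2 (by simpa using hp)
    have holdlt : ∀ p ∈ cycE (oseq K), p.1 < K ∧ p.2 < K := by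
      intro p hp
      exact ⟨hmem _ (mem_cycE hp).1, hmem _ (mem_cycE hp).2⟩
    refine ⟨t ++ 0 :: v, hosk2, ?_, ?_, ?_, ?_⟩
    · -- alphabet bound
      intro x hx
      rw [hosk, List.mem_append] at hx
      rcases hx with hx | hx
      · have := cycFrom_mem K (K / 2) 0 (by omega) x hx
        omega
      · have := hmem x hx
        omega
    · -- nodup
      rw [hsplice, List.nodup_append]
      refine ⟨hNEnd, by rw [hov]; exact hnd, ?_⟩
      intro p hp q hq hpq
      subst hpq
      rw [hov] at hq
      have h1 := Q_big K 0 p.1 p.2 (hQall' p hp)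
      have h2 := holdlt p hq
      omega
    · -- swap-free
      intro p hp q hq
      rw [hsplice, List.mem_append] at hp hq
      rcases hp with hp | hp <;> rcases hq with hq | hq
      · exact Q_noswap hK (hQall' p hp) (hQall' q hq)
      · rw [hov] at hq
        have h1 := Q_big K 0 p.1 p.2 (hQall' p hp)
        have h2 := holdlt q hq
        intro heq
        rw [Prod.ext_iff] at heq
        simp only [Prod.fst_swap, Prod.snd_swap] at heq
        omega
      · rw [hov] at hp
        have h1 := Q_big K 0 q.1 q.2 (hQall' q hq)
        have h2 := holdlt p hp
        intro heq
        rw [Prod.ext_iff] at heq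
        simp only [Prod.fst_swap, Prod.snd_swap] at heq
        omega
      · rw [hov] at hp hq
        exact hsw p hp q hq
    · -- length
      rw [hosk, List.length_append, hlen,
        cycFrom_length K (K / 2) 0 (by omega) (by omega)]
      set a := (K - 1) / 2 with hadef
      have ha : (k - 1) / 2 = a + 1 := by omega
      have h4 : 4 * (K / 2 - 0) + (if K % 2 = 1 then 3 else 0) = K + 2*a + 2 := by
        split_ifs <;> omega
      rw [h4, ha, hk2]
      ring

theorem construction (k : ℕ) (hk : 3 ≤ k) :
    ∃ s : List ℕ, IsOrientableSeq k 2 s ∧ s.length = k * ((k - 1) / 2) := by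
  obtain ⟨v, hv, hmem, hnd, hsw, hlen⟩ := inv k hk
  refine ⟨oseq k, isOrientable_of k _ ?_ hmem hnd hsw, hlen⟩
  rw [hlen]
  have h1 : 1 ≤ (k - 1) / 2 := by omega
  calc 2 ≤ k := by omega
    _ = k * 1 := (Nat.mul_one k).symm
    _ ≤ k * ((k - 1) / 2) := Nat.mul_le_mul_left k h1

end OSeq

/-- The maximum length of a `k`-ary orientable sequence of order 2 is
`k·⌊(k-1)/2⌋`. -/
theorem max_length_orientable_order_two (k : ℕ) (hk : 3 ≤ k) :
    IsGreatest {L : ℕ | ∃ s : List ℕ, IsOrientableSeq k 2 s ∧ s.length = L}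
      (k * ((k - 1) / 2)) := by
  constructor
  · exact OSeq.construction k hk
  · rintro L ⟨s, hs, rfl⟩
    exact OSeq.upper k hk s hs
end

section
/- For odd k ≥ 3, the concatenation U_k = σ₃σ₅⋯σ_k, where σ₃ = 012 and for odd m ≥ 5, σ_m is the word of length 2m−3 whose odd-indexed positions read 0,1,…,m−3 and whose even-indexed positions (together with the last position) read the alternating word ((m−2)(m−1))^{(m−1)/2}, is a cyclic orientable sequence of order 2 over {0,…,k−1} of length k(k−1)/2. -/
/-- For odd `m`, the building block `σ_m` of length `2m-3`: its odd-indexed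
positions read `0,1,…,m-3` and its even-indexed positions (together with the
last position) read `((m-2)(m-1))^((m-1)/2)`.  E.g. `σ₃ = 012`,
`σ₅ = 0314234`. -/
def sigmaOS (m : ℕ) : List ℕ :=
  (List.ofFn (fun i : Fin (m - 2) =>
    [i.val, if i.val % 2 = 0 then m - 2 else m - 1])).flatten ++ [m - 1]

/-- `U_k = σ₃σ₅⋯σ_k` for odd `k`. -/
def Uodd (k : ℕ) : List ℕ :=
  ((List.range ((k - 1) / 2)).map (fun t => sigmaOS (2 * t + 3))).flatten


def adjList : List ℕ → List (Sym2 ℕ)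
  | a :: b :: t => s(a, b) :: adjList (b :: t)
  | _ => []

def sBlocks (n a b : ℕ) : List ℕ :=
  (List.ofFn (fun i : Fin n => [i.val, if i.val % 2 = 0 then a else b])).flatten

def allPairsL (k : ℕ) : List (Sym2 ℕ) :=
  (List.range k).flatMap fun j => (List.range j).map fun i => s(i, j)

lemma adjList_append (s t : List ℕ) (hs : s ≠ []) (ht : t ≠ []) :
    adjList (s ++ t) = adjList s ++ s(s.getLast hs, t.head ht) :: adjList t := by
  induction s with
  | nil => simp at hs
  | cons a s ih =>
    cases s with
    | nil =>
      cases t with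
      | nil => simp at ht
      | cons c t' => simp [adjList]
    | cons b s' =>
      have := ih (by simp)
      simp only [List.cons_append, adjList, List.append_eq] at *
      rw [this]
      simp [List.getLast_cons]

lemma sBlocks_succ (n a b : ℕ) :
    sBlocks (n + 1) a b = sBlocks n a b ++ [n, if n % 2 = 0 then a else b] := by
  unfold sBlocks
  rw [List.ofFn_succ', List.concat_eq_append, List.flatten_append]
  simp

lemma sBlocks_length (n a b : ℕ) : (sBlocks n a b).length = 2 * n := by
  induction n with
  | zero => rfl
  | succ n ih => rw [sBlocks_succ]; simp [ih]; ring

lemma getLast_sBlocks (j a b : ℕ) (h) :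
    (sBlocks (2 * j + 1) a b).getLast h = a := by
  have h2 : sBlocks (2 * j + 1) a b = (sBlocks (2 * j) a b ++ [2 * j]) ++ [a] := by
    rw [sBlocks_succ]; simp [Nat.mul_mod_right]
  rw [List.getLast_congr _ _ h2, List.getLast_concat]; simp

lemma sBlocks_two_step (j a b : ℕ) :
    sBlocks (2 * (j+1) + 1) a b
      = sBlocks (2 * j + 1) a b ++ [2 * j + 1, b, 2 * j + 2, a] := by
  have h1 : 2 * (j+1) + 1 = (2 * j + 2) + 1 := by ring
  rw [h1, sBlocks_succ, show (2*j+2) = (2*j+1)+1 by ring, sBlocks_succ]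
  have : (2 * j + 1) % 2 = 1 := by omega
  have h2 : (2 * j + 1 + 1) % 2 = 0 := by omega
  simp [this, h2]

lemma sigma_pairs (n a b : ℕ) :
    (↑(adjList (sBlocks (2*n+1) a b ++ [b])) : Multiset (Sym2 ℕ)) + {s(b, 0)} =
    ↑((List.range (2*n+1)).map fun i => s(i, a)) +
    ↑((List.range (2*n+1)).map fun i => s(i, b)) + {s(a, b)} := by
  induction n with
  | zero =>
    have h1 : sBlocks 1 a b = [0, a] := by
      rw [show (1:ℕ) = 0 + 1 from rfl, sBlocks_succ]; rfl
    rw [h1]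
    show (↑[s(0,a), s(a,b)] : Multiset (Sym2 ℕ)) + {s(b,0)} = _
    rw [Sym2.eq_swap (a := b) (b := 0)]
    simp only [show (2*0+1 : ℕ) = 0 + 1 from rfl, List.range_succ, List.range_zero,
      List.nil_append, List.map_cons, List.map_nil,
      ← Multiset.cons_coe, ← Multiset.singleton_add, Multiset.coe_nil, add_zero]
    abel
  | succ j ih =>
    rw [sBlocks_two_step]
    have hne : sBlocks (2*j+1) a b ≠ [] := by
      intro h; have := sBlocks_length (2*j+1) a b; rw [h] at this; simp at this
    have hsplit : sBlocks (2*j+1) a b ++ [2*j+1, b, 2*j+2, a] ++ [b]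
        = sBlocks (2*j+1) a b ++ ([2*j+1, b, 2*j+2, a, b]) := by simp
    rw [hsplit, adjList_append _ _ hne (by simp), getLast_sBlocks]
    have hold : (adjList (sBlocks (2*j+1) a b ++ [b]) : List (Sym2 ℕ))
        = adjList (sBlocks (2*j+1) a b) ++ [s(a, b)] := by
      rw [adjList_append _ _ hne (by simp), getLast_sBlocks]; rfl
    rw [hold, ← Multiset.coe_add, Multiset.coe_singleton] at ih
    have htail : adjList [2*j+1, b, 2*j+2, a, b]
        = [s(2*j+1, b), s(b, 2*j+2), s(2*j+2, a), s(a, b)] := rfl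
    rw [htail]
    have hr : List.range (2*(j+1)+1) = List.range (2*j+1) ++ [2*j+1, 2*j+2] := by
      rw [show 2*(j+1)+1 = (2*j+2)+1 by ring, List.range_succ,
        show 2*j+2 = (2*j+1)+1 by ring, List.range_succ]
      simp
    rw [hr]
    rw [List.head_cons, ← Multiset.coe_add]
    simp only [List.map_append, List.map_cons, List.map_nil,
      ← Multiset.cons_coe, ← Multiset.singleton_add, Multiset.coe_nil, add_zero,
      ← Multiset.coe_add]
    rw [Sym2.eq_swap (a := b) (b := 2*j+2), Sym2.eq_swap (a := a) (b := 2*j+1)]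
    calc _ = ((↑(adjList (sBlocks (2*j+1) a b)) : Multiset (Sym2 ℕ)) + {s(a,b)} + {s(b,0)})
          + ({s(2*j+1, a)} + {s(2*j+1, b)} + {s(2*j+2, b)} + {s(2*j+2, a)}) := by abel
      _ = (↑(List.map (fun i => s(i, a)) (List.range (2*j+1))) +
            ↑(List.map (fun i => s(i, b)) (List.range (2*j+1))) + {s(a, b)})
          + ({s(2*j+1, a)} + {s(2*j+1, b)} + {s(2*j+2, b)} + {s(2*j+2, a)}) := by rw [ih]
      _ = _ := by abel

lemma allPairsL_succ (k : ℕ) :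
    allPairsL (k+1) = allPairsL k ++ (List.range k).map (fun i => s(i, k)) := by
  simp [allPairsL, List.range_succ]

lemma mem_allPairsL {e : Sym2 ℕ} {k : ℕ} :
    e ∈ allPairsL k ↔ ∃ j, j < k ∧ ∃ i, i < j ∧ s(i, j) = e := by
  simp [allPairsL]

lemma sigmaOS_eq (m : ℕ) : sigmaOS m = sBlocks (m-2) (m-2) (m-1) ++ [m-1] := rfl

lemma head_sBlocks (n a b : ℕ) : ∃ r, sBlocks (n+1) a b = 0 :: r := by
  simp only [sBlocks, List.ofFn_succ]
  exact ⟨_, rfl⟩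

lemma Uodd_step (n : ℕ) : Uodd (2*n+5) = Uodd (2*n+3) ++ sigmaOS (2*n+5) := by
  unfold Uodd
  have h1 : (2*n+5-1)/2 = (n+1)+1 := by omega
  have h2 : (2*n+3-1)/2 = n+1 := by omega
  rw [h1, h2, List.range_succ]
  simp [show 2*(n+1)+3 = 2*n+5 by ring]


lemma sigmaOS_block (j : ℕ) :
    sigmaOS (2*j+5) = sBlocks (2*(j+1)+1) (2*j+3) (2*j+4) ++ [2*j+4] := by
  rw [sigmaOS_eq]
  congr 1 <;> omega

lemma allPairs_two_step (K : ℕ) :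
    allPairsL (K+2) = allPairsL K ++ (List.range K).map (fun i => s(i, K))
      ++ ((List.range K).map (fun i => s(i, K+1)) ++ [s(K, K+1)]) := by
  rw [show K+2 = (K+1)+1 from rfl, allPairsL_succ, allPairsL_succ, List.range_succ,
    List.map_append]
  simp

lemma Uodd_pairs (n : ℕ) : ∃ u, Uodd (2*n+3) = 0 :: u ∧
    (↑(adjList (Uodd (2*n+3) ++ [0])) : Multiset (Sym2 ℕ)) = ↑(allPairsL (2*n+3)) := by
  induction n with
  | zero => exact ⟨[1, 2], by decide, by decide⟩
  | succ j ih =>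
    obtain ⟨u, hu, ihm⟩ := ih
    have hstep : Uodd (2*(j+1)+3) = Uodd (2*j+3) ++ sigmaOS (2*j+5) := by
      rw [show 2*(j+1)+3 = 2*j+5 by ring]; exact Uodd_step j
    obtain ⟨r0, hr0⟩ := head_sBlocks (2*(j+1)) (2*j+3) (2*j+4)
    have hσ : sigmaOS (2*j+5) = 0 :: (r0 ++ [2*j+4]) := by
      rw [sigmaOS_block j, show 2*(j+1)+1 = 2*(j+1)+1 from rfl]
      rw [show (2*(j+1)+1) = (2*(j+1))+1 by ring, hr0]
      rfl
    refine ⟨u ++ sigmaOS (2*j+5), by rw [hstep, hu]; rfl, ?_⟩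
    have hU : Uodd (2*j+3) ≠ [] := by rw [hu]; simp
    have hσ0 : sigmaOS (2*j+5) ++ [0] ≠ [] := by simp
    have hass : Uodd (2*(j+1)+3) ++ [0] = Uodd (2*j+3) ++ (sigmaOS (2*j+5) ++ [0]) := by
      rw [hstep, List.append_assoc]
    rw [hass, adjList_append _ _ hU hσ0]
    have hhead : (sigmaOS (2*j+5) ++ [0]).head hσ0 = 0 := by
      simp [hσ]
    rw [hhead]
    -- old cyclic list
    have hold : adjList (Uodd (2*j+3) ++ [0])
        = adjList (Uodd (2*j+3)) ++ s((Uodd (2*j+3)).getLast hU, 0) :: adjList [0] := by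
      rw [adjList_append _ _ hU (by simp)]; rfl
    rw [hold] at ihm
    -- decompose adjList (σ ++ [0])
    have hσne : sigmaOS (2*j+5) ≠ [] := by rw [hσ]; simp
    have hlastσ : (sigmaOS (2*j+5)).getLast hσne = 2*j+4 := by
      rw [List.getLast_congr _ _ (sigmaOS_block j), List.getLast_concat]; simp
    have hσdec : adjList (sigmaOS (2*j+5) ++ [0])
        = adjList (sigmaOS (2*j+5)) ++ [s(2*j+4, 0)] := by
      rw [adjList_append _ _ hσne (by simp), hlastσ]; rfl
    rw [hσdec]
    have hsp := sigma_pairs (j+1) (2*j+3) (2*j+4)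
    rw [show 2*(j+1)+1 = 2*(j+1)+1 from rfl] at hsp
    have hσadj : adjList (sigmaOS (2*j+5)) = adjList (sBlocks (2*(j+1)+1) (2*j+3) (2*j+4) ++ [2*j+4]) := by
      rw [sigmaOS_block j]
    -- allPairsL expansion
    have hAP : allPairsL (2*(j+1)+3) = allPairsL (2*j+3)
        ++ (List.range (2*j+3)).map (fun i => s(i, 2*j+3))
        ++ ((List.range (2*j+3)).map (fun i => s(i, 2*j+4)) ++ [s(2*j+3, 2*j+4)]) := by
      have := allPairs_two_step (2*j+3)
      rw [show 2*(j+1)+3 = (2*j+3)+2 by ring, this, show (2*j+3)+1 = 2*j+4 by ring]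
    rw [hAP]
    -- now multiset algebra
    simp only [show adjList [0] = ([] : List (Sym2 ℕ)) from rfl,
      ← Multiset.coe_add, ← Multiset.cons_coe, ← Multiset.singleton_add,
      Multiset.coe_nil, add_zero] at ihm ⊢
    rw [hσadj]
    have h21 : (2*(j+1)+1) = 2*(j+1)+1 := rfl
    calc _ = ((↑(adjList (Uodd (2*j+3))) : Multiset (Sym2 ℕ))
            + {s((Uodd (2*j+3)).getLast hU, 0)})
          + ((↑(adjList (sBlocks (2*(j+1)+1) (2*j+3) (2*j+4) ++ [2*j+4])) : Multiset (Sym2 ℕ))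
            + {s(2*j+4, 0)}) := by abel
      _ = ↑(allPairsL (2*j+3))
          + ((↑(adjList (sBlocks (2*(j+1)+1) (2*j+3) (2*j+4) ++ [2*j+4])) : Multiset (Sym2 ℕ))
            + {s(2*j+4, 0)}) := by rw [ihm]
      _ = ↑(allPairsL (2*j+3))
          + (↑((List.range (2*(j+1)+1)).map fun i => s(i, 2*j+3))
            + ↑((List.range (2*(j+1)+1)).map fun i => s(i, 2*j+4)) + {s(2*j+3, 2*j+4)}) := by
            rw [hsp]
      _ = _ := by
            rw [show 2*(j+1)+1 = 2*j+3 by ring]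
            abel


lemma adjList_length : ∀ l : List ℕ, (adjList l).length = l.length - 1
  | [] => rfl
  | [_] => rfl
  | a :: b :: t => by
    have := adjList_length (b :: t)
    simp [adjList] at this ⊢
    omega

lemma adjList_getElem : ∀ (l : List ℕ) (j : ℕ) (h : j + 1 < l.length)
    (h' : j < (adjList l).length),
    (adjList l)[j] = s(l[j]'(by omega), l[j+1]'h)
  | a :: b :: t, 0, _, _ => rfl
  | a :: b :: t, (j+1), h, h' => by
    have hh : j + 1 < (b :: t).length := by simpa using h
    have hh' : j < (adjList (b :: t)).length := by
      rw [adjList_length] at h' ⊢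
      simp at h' ⊢
      omega
    have := adjList_getElem (b :: t) j hh hh'
    simpa [adjList] using this

lemma take_two {l : List ℕ} (h : 1 < l.length) :
    l.take 2 = [l[0]'(by omega), l[1]'h] := by
  match l, h with
  | a :: b :: t, _ => rfl

lemma length_sigmaOS (m : ℕ) : (sigmaOS m).length = 2*(m-2)+1 := by
  rw [sigmaOS_eq]; simp [sBlocks_length]

lemma length_Uodd (n : ℕ) : (Uodd (2*n+3)).length = (n+1)*(2*n+3) := by
  induction n with
  | zero => rfl
  | succ j ih =>
    rw [show 2*(j+1)+3 = 2*j+5 by ring, Uodd_step, List.length_append, ih, length_sigmaOS]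
    have h1 : 2*j+5-2 = 2*j+3 := by omega
    rw [h1]; ring

lemma allPairsL_nodup (k : ℕ) : (allPairsL k).Nodup := by
  rw [allPairsL, List.nodup_flatMap]
  constructor
  · intro j _
    refine List.Nodup.map_on ?_ List.nodup_range
    intro i hi i' hi' h
    rw [List.mem_range] at hi hi'
    rcases Sym2.eq_iff.1 h with ⟨h1, _⟩ | ⟨h1, h2⟩ <;> omega
  · have hpw : (List.range k).Pairwise (· < ·) := List.pairwise_lt_range ..
    refine hpw.imp ?_
    intro j j' hjj'
    intro e he he'
    simp only [List.mem_map, List.mem_range] at he he'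
    obtain ⟨i, hi, rfl⟩ := he
    obtain ⟨i', hi', h⟩ := he'
    rcases Sym2.eq_iff.1 h with ⟨h1, h2⟩ | ⟨h1, h2⟩ <;> omega

lemma mem_sigmaOS {x m : ℕ} (hx : x ∈ sigmaOS m) (hm : 3 ≤ m) : x < m := by
  rw [sigmaOS_eq] at hx
  rcases List.mem_append.1 hx with h | h
  · simp only [sBlocks, List.mem_flatten, List.mem_ofFn] at h
    obtain ⟨L, ⟨i, rfl⟩, hxL⟩ := h
    have hi := i.isLt
    simp only [List.mem_cons, List.mem_singleton, List.not_mem_nil, or_false] at hxL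
    rcases hxL with rfl | rfl
    · omega
    · split <;> omega
  · simp at h; omega

lemma mem_Uodd {x n : ℕ} (hx : x ∈ Uodd (2*n+3)) : x < 2*n+3 := by
  unfold Uodd at hx
  simp only [List.mem_flatten, List.mem_map, List.mem_range] at hx
  obtain ⟨L, ⟨t, ht, rfl⟩, hxL⟩ := hx
  have := mem_sigmaOS hxL (by omega)
  omega

lemma gidx {l : List ℕ} {i j : ℕ} (h : i = j) {hi : i < l.length} {hj : j < l.length} :
    l[i]'hi = l[j]'hj := by subst h; rfl

/-- For odd `k ≥ 3`, the concatenation `U_k = σ₃σ₅⋯σ_k` is a cyclic orientable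
sequence of order 2 over `{0,…,k-1}` of length `k(k-1)/2`. -/
theorem Uodd_isOrientable (k : ℕ) (hk : 3 ≤ k) (hodd : Odd k) :
    IsOrientableSeq k 2 (Uodd k) ∧ (Uodd k).length = k * (k - 1) / 2 := by
  obtain ⟨n, rfl⟩ : ∃ n, k = 2*n+3 := by
    obtain ⟨m, hm⟩ := hodd
    exact ⟨m - 1, by omega⟩
  obtain ⟨u, hu, hM⟩ := Uodd_pairs n
  set U := Uodd (2*n+3) with hUdef
  have hL : U.length = (n+1)*(2*n+3) := length_Uodd n
  have hL2 : 2 ≤ U.length := by rw [hL]; nlinarith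
  have hlen : U.length = (2*n+3) * ((2*n+3) - 1) / 2 := by
    have h1 : (2*n+3) - 1 = 2*n+2 := by omega
    rw [h1, hL]
    have h2 : (2*n+3) * (2*n+2) = ((n+1)*(2*n+3)) * 2 := by ring
    rw [h2, Nat.mul_div_cancel _ (by norm_num)]
  have hperm : (adjList (U ++ [0])).Perm (allPairsL (2*n+3)) := Multiset.coe_eq_coe.1 hM
  have hnodupC : (adjList (U ++ [0])).Nodup := hperm.nodup_iff.2 (allPairsL_nodup _)
  have hmemC : ∀ e ∈ adjList (U ++ [0]), ∃ j, j < 2*n+3 ∧ ∃ i, i < j ∧ s(i, j) = e := by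
    intro e he
    exact mem_allPairsL.1 (hperm.mem_iff.1 he)
  have hlenC : (adjList (U ++ [0])).length = U.length := by
    rw [adjList_length, List.length_append]
    simp
  have hmodlt : ∀ i : ℕ, (i+1) % U.length < U.length := fun i => Nat.mod_lt _ (by omega)
  have hget : ∀ (i : ℕ) (hi : i < U.length),
      (adjList (U ++ [0]))[i]'(by rw [hlenC]; exact hi)
        = s(U[i]'hi, U[(i+1) % U.length]'(hmodlt i)) := by
    intro i hi
    have h1 : i + 1 < (U ++ [0]).length := by
      rw [List.length_append]; simp; omega
    rw [adjList_getElem (U ++ [0]) i h1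
      (by rw [adjList_length, List.length_append]; simp; omega)]
    have e1 : (U ++ [0])[i]'(by omega) = U[i]'hi := List.getElem_append_left hi
    rw [e1]
    by_cases hcase : i + 1 < U.length
    · have e2 : (U ++ [0])[i+1]'h1 = U[i+1]'hcase := List.getElem_append_left hcase
      rw [e2]
      have e3 : U[i+1]'hcase = U[(i+1) % U.length]'(hmodlt i) :=
        gidx (Nat.mod_eq_of_lt hcase).symm
      rw [e3]
    · have hiL : i + 1 = U.length := by omega
      have e2 : (U ++ [0])[i+1]'h1 = 0 := by
        rw [List.getElem_append_right (by omega : U.length ≤ i + 1)]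
        simp [hiL]
      have e4 : U[(i+1) % U.length]'(hmodlt i) = 0 := by
        have e5 : U[(i+1) % U.length]'(hmodlt i) = U[0]'(by omega) :=
          gidx (by rw [hiL]; exact Nat.mod_self _)
        rw [e5]
        simp [hu]
      rw [e2, e4]
  have hinj : ∀ (i : ℕ) (hi : i < U.length) (j : ℕ) (hj : j < U.length),
      s(U[i]'hi, U[(i+1) % U.length]'(hmodlt i))
        = s(U[j]'hj, U[(j+1) % U.length]'(hmodlt j)) → i = j := by
    intro i hi j hj h
    refine (List.Nodup.getElem_inj_iff hnodupC
      (hi := by rw [hlenC]; exact hi) (hj := by rw [hlenC]; exact hj)).1 ?_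
    rw [hget i hi, hget j hj]
    exact h
  have hwin : ∀ (i : ℕ) (hi : i < U.length),
      cycWindow U 2 i = [U[i]'hi, U[(i+1) % U.length]'(hmodlt i)] := by
    intro i hi
    unfold cycWindow
    have hrl : (U.rotate i).length = U.length := List.length_rotate ..
    have h1 : 1 < (U.rotate i).length := by rw [hrl]; omega
    rw [take_two h1]
    have e0 : (U.rotate i)[0]'(by omega) = U[i]'hi := by
      rw [List.getElem_rotate]
      exact gidx (by rw [Nat.zero_add]; exact Nat.mod_eq_of_lt hi)
    have e1 : (U.rotate i)[1]'h1 = U[(i+1) % U.length]'(hmodlt i) := by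
      rw [List.getElem_rotate]
      exact gidx (by rw [Nat.add_comm])
    rw [e0, e1]
  have hnotdiag : ∀ (i : ℕ) (hi : i < U.length),
      U[i]'hi ≠ U[(i+1) % U.length]'(hmodlt i) := by
    intro i hi h
    have hCmem : (adjList (U ++ [0]))[i]'(by rw [hlenC]; exact hi) ∈ adjList (U ++ [0]) :=
      List.getElem_mem _
    obtain ⟨j', hj', i', hi', hij⟩ := hmemC _ hCmem
    rw [hget i hi, ← h] at hij
    rcases Sym2.eq_iff.1 hij with ⟨h1, h2⟩ | ⟨h1, h2⟩ <;> omega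
  refine ⟨⟨?_, ?_, ?_, ?_⟩, hlen⟩
  · intro x hx; exact mem_Uodd hx
  · exact hL2
  · intro i hi j hj hij heq
    rw [hwin i hi, hwin j hj] at heq
    simp only [List.cons.injEq, and_true] at heq
    obtain ⟨h1, h2⟩ := heq
    exact hij (hinj i hi j hj (by rw [Sym2.eq_iff]; left; exact ⟨h1, h2⟩))
  · intro i hi j hj heq
    rw [hwin i hi, hwin j hj] at heq
    have hrev : ([U[j]'hj, U[(j+1) % U.length]'(hmodlt j)]).reverse
        = [U[(j+1) % U.length]'(hmodlt j), U[j]'hj] := rfl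
    rw [hrev] at heq
    simp only [List.cons.injEq, and_true] at heq
    obtain ⟨h1, h2⟩ := heq
    have hij : i = j := hinj i hi j hj (by rw [Sym2.eq_iff]; right; exact ⟨h1, h2⟩)
    subst hij
    exact hnotdiag i hi h1
end

section
/- Let S₁ and S₂ be disjoint subsets of Σⁿ containing, respectively, α = x a₂⋯aₙ and α̂ = y a₂⋯aₙ with x ≠ y (a conjugate pair). If U₁ is a universal cycle for S₁ written as a linear word ending with α as a suffix, and U₂ is a universal cycle for S₂ written as a linear word ending with α̂ as a suffix, then the concatenation U₁U₂, regarded as a cyclic sequence, is a universal cycle for S₁ ∪ S₂. -/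
/-- `U` is a universal cycle for `S ⊆ Σⁿ`: it has length `|S|`, each of its
cyclic length-`n` windows lies in `S`, and the windows are pairwise distinct
(hence each element of `S` occurs exactly once as a cyclic window). -/
def IsUniversalCycle (n : ℕ) (S : Finset (List ℕ)) (U : List ℕ) : Prop :=
  U.length = S.card ∧
  (∀ i < U.length, (U.rotate i).take n ∈ S) ∧
  (∀ i < U.length, ∀ j < U.length,
    (U.rotate i).take n = (U.rotate j).take n → i = j)

private lemma drop_left'' (P Q : List ℕ) (i : ℕ) (h : P.length ≤ i) :
    (P ++ Q).drop i = Q.drop (i - P.length) := by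
  rw [List.drop_append, List.drop_eq_nil_of_le h, List.nil_append]

private lemma win_aux (L : List ℕ) (n i : ℕ) (hi : i ≤ L.length) (hn : n ≤ L.length) :
    (L.rotate i).take n = ((L ++ L).drop i).take n := by
  rw [List.rotate_eq_drop_append_take hi, List.drop_append,
      Nat.sub_eq_zero_of_le hi, List.drop_zero, List.take_append,
      List.take_append, List.take_take]
  congr 2
  simp only [List.length_drop]
  omega

private lemma inner_win (P M : List ℕ) (n i : ℕ) (h : i + n ≤ P.length) :
    ((P ++ M).drop i).take n = (P.drop i).take n := by
  rw [List.drop_append, Nat.sub_eq_zero_of_le (by omega), List.drop_zero,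
      List.take_append_of_le_length (by rw [List.length_drop]; omega)]

private lemma cross_win (P M : List ℕ) (c : ℕ) (ts : List ℕ) (n j : ℕ)
    (hc : (c :: ts).length = n) (hj : j ≤ n) :
    ((P ++ ((c :: ts) ++ M)).drop (P.length + j)).take n = (c :: ts).drop j ++ M.take j := by
  rw [drop_left'' _ _ _ (Nat.le_add_right _ _), Nat.add_sub_cancel_left,
      List.drop_append, Nat.sub_eq_zero_of_le (by omega),
      List.drop_zero, List.take_append,
      List.take_of_length_le (l := (c :: ts).drop j) (by rw [List.length_drop]; omega)]
  have hidx : n - ((c :: ts).drop j).length = j := by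
    rw [List.length_drop, hc]; omega
  rw [hidx]

/-- Cycle joining: if `S₁, S₂ ⊆ Σⁿ` are disjoint, `x :: t ∈ S₁` and
`y :: t ∈ S₂` form a conjugate pair (`x ≠ y`), `U₁` is a universal cycle for
`S₁` ending with `x :: t`, and `U₂` is a universal cycle for `S₂` ending with
`y :: t`, then `U₁ ++ U₂` is a universal cycle for `S₁ ∪ S₂`. -/
theorem cycle_joining (n k : ℕ) (S₁ S₂ : Finset (List ℕ))
    (hS : ∀ w ∈ S₁ ∪ S₂, w.length = n ∧ ∀ x ∈ w, x < k)
    (hd : Disjoint S₁ S₂)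
    (x y : ℕ) (t : List ℕ) (hxy : x ≠ y) (hlen : (x :: t).length = n)
    (hα : x :: t ∈ S₁) (hβ : y :: t ∈ S₂)
    (U₁ U₂ : List ℕ)
    (h₁ : IsUniversalCycle n S₁ U₁) (h₂ : IsUniversalCycle n S₂ U₂)
    (hs₁ : (x :: t) <:+ U₁) (hs₂ : (y :: t) <:+ U₂) :
    IsUniversalCycle n (S₁ ∪ S₂) (U₁ ++ U₂) := by
  obtain ⟨c₁, hw₁, hinj₁⟩ := h₁
  obtain ⟨c₂, hw₂, hinj₂⟩ := h₂
  obtain ⟨A, hA⟩ := hs₁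
  obtain ⟨B, hB⟩ := hs₂
  have hleny : (y :: t).length = n := by simpa using hlen
  have hlt : t.length + 1 = n := by simpa using hlen
  have ha : U₁.length = A.length + n := by rw [← hA, List.length_append, hlen]
  have hb : U₂.length = B.length + n := by rw [← hB, List.length_append, hleny]
  have hn1 : 1 ≤ n := by omega
  have h1n : n ≤ U₁.length := by omega
  have h2n : n ≤ U₂.length := by omega
  have hdropxy : ∀ j, 1 ≤ j → (x :: t).drop j = (y :: t).drop j := by
    intro j hj
    cases j with
    | zero => omega
    | succ j' => simp
  have hUlen : (U₁ ++ U₂).length = U₁.length + U₂.length := List.length_append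
  have hwin : ∀ i < U₁.length + U₂.length, ∃ p,
      ((p = i ∧ (i + n ≤ U₁.length ∨ (U₁.length ≤ i ∧ i + n ≤ U₁.length + U₂.length))) ∨
       (p = i + U₂.length ∧ U₁.length < i + n ∧ i < U₁.length) ∨
       (p + U₂.length = i ∧ U₁.length + U₂.length < i + n ∧ U₁.length ≤ i)) ∧
      ((p < U₁.length ∧ ((U₁ ++ U₂).rotate i).take n = (U₁.rotate p).take n) ∨
       (U₁.length ≤ p ∧ p - U₁.length < U₂.length ∧
         ((U₁ ++ U₂).rotate i).take n = (U₂.rotate (p - U₁.length)).take n)) := by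
    intro i hi
    rcases le_or_gt (i + n) U₁.length with h1 | h1
    · -- case 1 : window inside U₁
      refine ⟨i, Or.inl ⟨rfl, Or.inl h1⟩, Or.inl ⟨by omega, ?_⟩⟩
      rw [win_aux _ n i (by simp only [List.length_append]; omega)
            (by simp only [List.length_append]; omega),
          win_aux U₁ n i (by omega) h1n, List.append_assoc,
          inner_win U₁ (U₂ ++ (U₁ ++ U₂)) n i h1, inner_win U₁ U₁ n i h1]
    · rcases lt_or_ge i U₁.length with h2 | h2
      · -- case 2 : window crosses from U₁ into U₂
        obtain ⟨j, hj1, hjn, rfl⟩ : ∃ j, 1 ≤ j ∧ j < n ∧ i = A.length + j :=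
          ⟨i - A.length, by omega, by omega, by omega⟩
        refine ⟨A.length + j + U₂.length,
          Or.inr (Or.inl ⟨rfl, by omega, by omega⟩),
          Or.inr ⟨by omega, by omega, ?_⟩⟩
        have hidx : A.length + j + U₂.length - U₁.length = B.length + j := by omega
        rw [hidx]
        have e1 : ((U₁ ++ U₂).rotate (A.length + j)).take n
            = (x :: t).drop j ++ U₂.take j := by
          rw [win_aux _ n _ (by simp only [List.length_append]; omega)
              (by simp only [List.length_append]; omega)]
          conv_lhs => rw [← hA]
          simp only [List.append_assoc]
          rw [cross_win A _ x t n j hlen (by omega),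
              List.take_append_of_le_length (by omega)]
        have e2 : (U₂.rotate (B.length + j)).take n
            = (y :: t).drop j ++ U₂.take j := by
          rw [win_aux _ n _ (by omega) h2n]
          conv_lhs => rw [← hB]
          simp only [List.append_assoc]
          rw [cross_win B _ y t n j hleny (by omega), hB]
        rw [e1, e2, hdropxy j hj1]
      · rcases le_or_gt (i + n) (U₁.length + U₂.length) with h3 | h3
        · -- case 3 : window inside U₂
          refine ⟨i, Or.inl ⟨rfl, Or.inr ⟨h2, h3⟩⟩, Or.inr ⟨h2, by omega, ?_⟩⟩
          rw [win_aux _ n i (by simp only [List.length_append]; omega)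
                (by simp only [List.length_append]; omega),
              win_aux U₂ n _ (by omega) h2n, List.append_assoc,
              drop_left'' U₁ _ i h2,
              inner_win U₂ (U₁ ++ U₂) n (i - U₁.length) (by omega),
              inner_win U₂ U₂ n (i - U₁.length) (by omega)]
        · -- case 4 : window crosses from U₂ into U₁
          obtain ⟨j, hj1, hjn, rfl⟩ : ∃ j, 1 ≤ j ∧ j < n ∧ i = U₁.length + B.length + j :=
            ⟨i - U₁.length - B.length, by omega, by omega, by omega⟩
          refine ⟨A.length + j, Or.inr (Or.inr ⟨by omega, by omega, by omega⟩),
            Or.inl ⟨by omega, ?_⟩⟩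
          have e1 : ((U₁ ++ U₂).rotate (U₁.length + B.length + j)).take n
              = (y :: t).drop j ++ U₁.take j := by
            rw [win_aux _ n _ (by simp only [List.length_append]; omega)
                (by simp only [List.length_append]; omega), List.append_assoc,
                drop_left'' U₁ _ _ (by omega)]
            have hidx : U₁.length + B.length + j - U₁.length = B.length + j := by omega
            rw [hidx]
            conv_lhs => rw [← hB]
            simp only [List.append_assoc]
            rw [cross_win B _ y t n j hleny (by omega),
                List.take_append_of_le_length (by omega)]
          have e2 : (U₁.rotate (A.length + j)).take n
              = (x :: t).drop j ++ U₁.take j := by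
            rw [win_aux _ n _ (by omega) h1n]
            conv_lhs => rw [← hA]
            simp only [List.append_assoc]
            rw [cross_win A _ x t n j hlen (by omega), hA]
          rw [e1, e2, ← hdropxy j hj1]
  have hcard : (U₁ ++ U₂).length = (S₁ ∪ S₂).card := by
    rw [hUlen, c₁, c₂, Finset.card_union_of_disjoint hd]
  refine ⟨hcard, ?_, ?_⟩
  · intro i hi
    rw [hUlen] at hi
    obtain ⟨p, -, hp⟩ := hwin i hi
    rcases hp with ⟨hp1, hpe⟩ | ⟨hp1, hp2, hpe⟩
    · rw [hpe]; exact Finset.mem_union_left _ (hw₁ p hp1)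
    · rw [hpe]; exact Finset.mem_union_right _ (hw₂ _ hp2)
  · intro i hi j hj heq
    rw [hUlen] at hi hj
    obtain ⟨p, hpb, hp⟩ := hwin i hi
    obtain ⟨q, hqb, hq⟩ := hwin j hj
    rcases hp with ⟨hp1, hpe⟩ | ⟨hp1, hp2, hpe⟩ <;>
      rcases hq with ⟨hq1, hqe⟩ | ⟨hq1, hq2, hqe⟩
    · have hpq := hinj₁ p hp1 q hq1 (by rw [← hpe, ← hqe]; exact heq)
      omega
    · have hmem1 : (U₂.rotate (q - U₁.length)).take n ∈ S₁ := by
        rw [← hqe, ← heq, hpe]; exact hw₁ p hp1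
      exact absurd hmem1 (Finset.disjoint_right.mp hd (hw₂ _ hq2))
    · have hmem1 : (U₂.rotate (p - U₁.length)).take n ∈ S₁ := by
        rw [← hpe, heq, hqe]; exact hw₁ q hq1
      exact absurd hmem1 (Finset.disjoint_right.mp hd (hw₂ _ hp2))
    · have hpq := hinj₂ (p - U₁.length) hp2 (q - U₁.length) hq2
        (by rw [← hpe, ← hqe]; exact heq)
      omega
end

section
/- If α is a word over {0,…,k−1} that belongs to the rotation class of some asymmetric bracelet, then its reversal α^R does not belong to the rotation class of any asymmetric bracelet. -/
lemma isRotationOf_iff_isRotated (β α : List ℕ) :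
    IsRotationOf β α ↔ α ~r β := by
  constructor
  · rintro ⟨i, rfl⟩; exact ⟨i, rfl⟩
  · rintro ⟨i, rfl⟩; exact ⟨i, rfl⟩

/-- If `α` lies in the rotation class of some asymmetric bracelet, then its
reversal does not. -/
theorem reverse_not_in_asymBracelet_classes (α : List ℕ)
    (h : ∃ β : List ℕ, IsAsymBracelet β ∧ IsRotationOf α β) :
    ¬ ∃ β : List ℕ, IsAsymBracelet β ∧ IsRotationOf α.reverse β := by
  rintro ⟨γ, ⟨⟨hγ1, hγ2⟩, hγ3⟩, hαγ⟩
  obtain ⟨β, ⟨⟨hβ1, hβ2⟩, hβ3⟩, hαβ⟩ := h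
  rw [isRotationOf_iff_isRotated] at hαβ hαγ
  -- hαβ : β ~r α, hαγ : γ ~r α.reverse
  have h1 : β.reverse ~r γ := by
    have := hαβ.reverse  -- β.reverse ~r α.reverse
    exact this.trans hαγ.symm
  have h2 : γ.reverse ~r β := by
    have := hαγ.reverse  -- γ.reverse ~r α.reverse.reverse
    rw [List.reverse_reverse] at this
    exact this.trans hαβ.symm
  obtain ⟨i, hi⟩ := h1
  obtain ⟨j, hj⟩ := h2
  have hβγ : β ≤ γ := hi ▸ hβ2 i
  have hγβ : γ ≤ β := hj ▸ hγ2 j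
  have hEq : β = γ := le_antisymm hβγ hγβ
  apply hβ3
  rw [IsSymmetric, isRotationOf_iff_isRotated]
  subst hEq
  exact (List.IsRotated.symm ⟨i, hi⟩)
end

section
/- The number of k-ary length-n words whose length-n substring count in an orientable sequence is limited by palindromes: a cyclic orientable sequence of order n over {0,…,k−1} has length at most (kⁿ − k^{⌊(n+1)/2⌋})/2. -/
/-- Encode a list of naturals (with entries `< k`) as a function `Fin n → Fin k`. -/
def enc (k n : ℕ) (hk : 0 < k) (l : List ℕ) : Fin n → Fin k :=
  fun i => ⟨l.getD i 0 % k, Nat.mod_lt _ hk⟩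

lemma enc_inj {k n : ℕ} (hk : 0 < k) {l₁ l₂ : List ℕ}
    (h1 : l₁.length = n) (h2 : l₂.length = n)
    (m1 : ∀ x ∈ l₁, x < k) (m2 : ∀ x ∈ l₂, x < k)
    (h : enc k n hk l₁ = enc k n hk l₂) : l₁ = l₂ := by
  apply List.ext_getElem (by omega)
  intro i hi hi'
  have hin : i < n := by omega
  have := congrFun h ⟨i, hin⟩
  simp only [enc, Fin.mk.injEq] at this
  rw [List.getD_eq_getElem _ _ hi, List.getD_eq_getElem _ _ hi'] at this
  rwa [Nat.mod_eq_of_lt (m1 _ (List.getElem_mem hi)),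
    Nat.mod_eq_of_lt (m2 _ (List.getElem_mem hi'))] at this

lemma enc_rev {k n : ℕ} (hk : 0 < k) {l : List ℕ} (h1 : l.length = n) :
    enc k n hk l.reverse = enc k n hk l ∘ Fin.rev := by
  funext i
  have hi : i.val < n := i.isLt
  apply Fin.ext
  simp only [enc, Function.comp_apply]
  congr 1
  rw [List.getD_eq_getElem _ _ (by simp; omega),
    List.getD_eq_getElem _ _ (by simp [Fin.val_rev]; omega)]
  rw [List.getElem_reverse]
  congr 1
  simp [Fin.val_rev]
  omega

lemma pal_card_ge (k n : ℕ) (hn : 0 < n) :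
    k ^ ((n + 1) / 2) ≤ (Finset.univ.filter
      (fun f : Fin n → Fin k => f ∘ Fin.rev = f)).card := by
  classical
  have hh : (n + 1) / 2 ≤ n := by omega
  let ext : (Fin ((n + 1) / 2) → Fin k) → (Fin n → Fin k) :=
    fun g i => g ⟨min i.val (n - 1 - i.val), by omega⟩
  have hmem : ∀ g, ext g ∈ Finset.univ.filter
      (fun f : Fin n → Fin k => f ∘ Fin.rev = f) := by
    intro g
    simp only [Finset.mem_filter, Finset.mem_univ, true_and]
    funext i
    simp only [ext, Function.comp_apply]
    congr 1
    apply Fin.ext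
    simp [Fin.val_rev]
    omega
  have hinj : Function.Injective ext := by
    have : Function.LeftInverse
        (fun (f : Fin n → Fin k) (j : Fin ((n + 1) / 2)) => f ⟨j.val, by omega⟩) ext := by
      intro g
      funext j
      simp only [ext]
      congr 1
      apply Fin.ext
      have := j.isLt
      simp only []
      omega
    exact this.injective
  calc k ^ ((n + 1) / 2) = Fintype.card (Fin ((n + 1) / 2) → Fin k) := by simp
    _ ≤ _ := Finset.card_le_card_of_injOn ext (fun g _ => hmem g) hinj.injOn

lemma main_bound (k n L : ℕ) (w : ℕ → List ℕ)
    (hlen : ∀ i < L, (w i).length = n)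
    (hmem : ∀ i < L, ∀ x ∈ w i, x < k)
    (hinj : ∀ i < L, ∀ j < L, i ≠ j → w i ≠ w j)
    (hrev : ∀ i < L, ∀ j < L, w i ≠ (w j).reverse) :
    2 * L ≤ k ^ n - k ^ ((n + 1) / 2) := by
  classical
  rcases Nat.eq_zero_or_pos L with hL | hL
  · simp [hL]
  have hn : 0 < n := by
    by_contra hcon
    have h0 : w 0 = [] := List.length_eq_zero_iff.mp (by rw [hlen 0 hL]; omega)
    exact hrev 0 hL 0 hL (by simp [h0])
  have hk : 0 < k := by
    have h1 : (w 0).length = n := hlen 0 hL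
    have hne : w 0 ≠ [] := by intro h; rw [h] at h1; simp at h1; omega
    obtain ⟨x, hx⟩ := List.exists_mem_of_ne_nil _ hne
    exact Nat.lt_of_le_of_lt (Nat.zero_le x) (hmem 0 hL x hx)
  have memrev : ∀ i < L, ∀ x ∈ (w i).reverse, x < k := by
    intro i hi x hx
    exact hmem i hi x (List.mem_reverse.mp hx)
  have lenrev : ∀ i < L, ((w i).reverse).length = n := by
    intro i hi; simp [hlen i hi]
  set A : Finset (Fin n → Fin k) :=
    (Finset.range L).image (fun i => enc k n hk (w i)) with hA
  set B : Finset (Fin n → Fin k) :=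
    (Finset.range L).image (fun i => enc k n hk ((w i).reverse)) with hB
  have cardA : A.card = L := by
    rw [hA, Finset.card_image_of_injOn, Finset.card_range]
    intro i hi j hj hij
    simp only [Finset.mem_coe, Finset.mem_range] at hi hj
    by_contra hne
    exact hinj i hi j hj hne
      (enc_inj hk (hlen i hi) (hlen j hj) (hmem i hi) (hmem j hj) hij)
  have cardB : B.card = L := by
    rw [hB, Finset.card_image_of_injOn, Finset.card_range]
    intro i hi j hj hij
    simp only [Finset.mem_coe, Finset.mem_range] at hi hj
    by_contra hne
    have := enc_inj hk (lenrev i hi) (lenrev j hj) (memrev i hi) (memrev j hj) hij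
    exact hinj i hi j hj hne (List.reverse_injective this)
  have disj : Disjoint A B := by
    rw [Finset.disjoint_left]
    intro f hfA hfB
    rw [hA, Finset.mem_image] at hfA
    rw [hB, Finset.mem_image] at hfB
    obtain ⟨i, hi, hfi⟩ := hfA
    obtain ⟨j, hj, hfj⟩ := hfB
    rw [Finset.mem_range] at hi hj
    have heq := hfi.trans hfj.symm
    exact hrev i hi j hj
      (enc_inj hk (hlen i hi) (lenrev j hj) (hmem i hi) (memrev j hj) heq)
  set N : Finset (Fin n → Fin k) :=
    Finset.univ.filter (fun f => ¬ f ∘ Fin.rev = f) with hN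
  have subA : A ⊆ N := by
    intro f hf
    rw [hA, Finset.mem_image] at hf
    obtain ⟨i, hi, hfi⟩ := hf
    rw [Finset.mem_range] at hi
    rw [hN, Finset.mem_filter]
    refine ⟨Finset.mem_univ _, fun hpal => ?_⟩
    have : enc k n hk ((w i).reverse) = enc k n hk (w i) := by
      rw [enc_rev hk (hlen i hi), hfi, hpal]
    have := enc_inj hk (lenrev i hi) (hlen i hi) (memrev i hi) (hmem i hi) this
    exact hrev i hi i hi this.symm
  have subB : B ⊆ N := by
    intro f hf
    rw [hB, Finset.mem_image] at hf
    obtain ⟨i, hi, hfi⟩ := hf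
    rw [Finset.mem_range] at hi
    rw [hN, Finset.mem_filter]
    refine ⟨Finset.mem_univ _, fun hpal => ?_⟩
    have : enc k n hk (((w i).reverse).reverse) = enc k n hk ((w i).reverse) := by
      rw [enc_rev hk (lenrev i hi), hfi, hpal]
    have := enc_inj hk (by simp [hlen i hi]) (lenrev i hi)
      (by intro x hx; exact hmem i hi x (by simpa using hx)) (memrev i hi) this
    rw [List.reverse_reverse] at this
    exact hrev i hi i hi this
  have hNcard : N.card = k ^ n - (Finset.univ.filter
      (fun f : Fin n → Fin k => f ∘ Fin.rev = f)).card := by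
    have hcard : (Finset.univ : Finset (Fin n → Fin k)).card = k ^ n := by
      simp [Finset.card_univ]
    rw [hN, Finset.filter_not, Finset.card_sdiff_of_subset (Finset.filter_subset _ _), hcard]
  calc 2 * L = A.card + B.card := by rw [cardA, cardB]; ring
    _ = (A ∪ B).card := (Finset.card_union_of_disjoint disj).symm
    _ ≤ N.card := Finset.card_le_card (Finset.union_subset subA subB)
    _ = k ^ n - (Finset.univ.filter
        (fun f : Fin n → Fin k => f ∘ Fin.rev = f)).card := hNcard
    _ ≤ k ^ n - k ^ ((n + 1) / 2) := Nat.sub_le_sub_left (pal_card_ge k n hn) _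

/-- A cyclic orientable sequence of order `n` over `{0,…,k-1}` has length at
most `(kⁿ − k^⌊(n+1)/2⌋)/2`. -/
theorem orientable_length_upper_bound (k n : ℕ) (s : List ℕ)
    (h : IsOrientableSeq k n s) :
    2 * s.length ≤ k ^ n - k ^ ((n + 1) / 2) := by
  obtain ⟨halpha, hlen, hinj, hrev⟩ := h
  apply main_bound k n s.length (fun i => cycWindow s n i)
  · intro i hi
    simp only [cycWindow, List.length_take, List.length_rotate]
    omega
  · intro i hi x hx
    apply halpha
    have := List.take_subset n (s.rotate i) hx
    rwa [List.mem_rotate] at this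
  · exact hinj
  · exact hrev
end
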